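/- arXiv:2109.01324 — 3 statements merged into one kernel-verified Lean document; each statement's English description precedes it below -/
import Mathlib

section
/- Let Γ be a connected simple graph with normalized Laplacian ℒ = D^{−1/2} L D^{−1/2} and normalized Green's function 𝒢 = the Moore–Penrose pseudoinverse of ℒ. Then for all vertices u, v: 𝒢(u,v) = (√(d_u d_v)/(vol²(Γ)·τ)) · ( Σ_{T₁∪T₂ ∈ 𝔽₂, u,v ∈ T₁} vol²(T₂) − Σ_{T₁∪T₂ ∈ 𝔽₂, u ∈ T₁, v ∈ T₂} vol(T₁)·vol(T₂) ), where τ is the number of spanning trees, 𝔽₂ the set of spanning 2-forests, d_u the degree of u, vol(T) = Σ_{z∈T} d_z, and vol(Γ) = Σ_{z∈V} d_z. -/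
open scoped Classical
open Finset Matrix

namespace Paper

variable {V : Type*} [Fintype V] [DecidableEq V]

/-- Out-degree of `u` in the weighted digraph with weight function `ω`. -/
noncomputable def deg (ω : V → V → ℝ) (u : V) : ℝ := ∑ v, ω u v

/-- A weighted digraph is strongly connected if every vertex can reach every other
vertex along edges of positive weight. -/
def StronglyConnected (ω : V → V → ℝ) : Prop :=
  ∀ u v : V, Relation.ReflTransGen (fun a b => 0 < ω a b) u v

/-- The combinatorial Laplacian `L = D - A` of a weighted digraph. -/
noncomputable def lap (ω : V → V → ℝ) : Matrix V V ℝ :=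
  Matrix.of fun u v => (if u = v then deg ω u else 0) - ω u v

/-- The transition probability matrix `P = D⁻¹ A` of the random walk. -/
noncomputable def trans (ω : V → V → ℝ) : Matrix V V ℝ :=
  Matrix.of fun u v => ω u v / deg ω u

/-- `G` is the Moore–Penrose pseudoinverse of `M` (four Penrose conditions). -/
def IsMoorePenrose (M G : Matrix V V ℝ) : Prop :=
  M * G * M = M ∧ G * M * G = G ∧ (M * G)ᵀ = M * G ∧ (G * M)ᵀ = G * M

/-- `v` reaches `r` under iteration of the parent function `f`. -/
def Reaches (f : V → V) (v r : V) : Prop := ∃ k : ℕ, f^[k] v = r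

/-- `f` encodes a spanning in-tree of the weighted digraph `ω` rooted at `r`:
every non-root vertex has its unique out-edge `(v, f v)` an edge of the digraph,
the root is a fixed point, and every vertex reaches the root. -/
def IsInTree (ω : V → V → ℝ) (r : V) (f : V → V) : Prop :=
  f r = r ∧ (∀ v, v ≠ r → 0 < ω v (f v)) ∧ ∀ v, Reaches f v r

/-- The weight of the spanning in-tree encoded by `f` with root `r`. -/
noncomputable def treeWeight (ω : V → V → ℝ) (r : V) (f : V → V) : ℝ :=
  ∏ v ∈ Finset.univ.erase r, ω v (f v)

/-- `τ_r`: total weight of spanning in-trees rooted at `r`. -/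
noncomputable def tau (ω : V → V → ℝ) (r : V) : ℝ :=
  ∑ f ∈ Finset.univ.filter (fun f : V → V => IsInTree ω r f), treeWeight ω r f

/-- `f` encodes a rooted spanning 2-forest with (distinct) roots `r₁`, `r₂`. -/
def IsForest2 (ω : V → V → ℝ) (r₁ r₂ : V) (f : V → V) : Prop :=
  r₁ ≠ r₂ ∧ f r₁ = r₁ ∧ f r₂ = r₂ ∧ (∀ v, v ≠ r₁ → v ≠ r₂ → 0 < ω v (f v)) ∧
    ∀ v, Reaches f v r₁ ∨ Reaches f v r₂

/-- The weight of the rooted spanning 2-forest encoded by `f` with roots `r₁`, `r₂`. -/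
noncomputable def forestWeight (ω : V → V → ℝ) (r₁ r₂ : V) (f : V → V) : ℝ :=
  ∏ v ∈ (Finset.univ.erase r₁).erase r₂, ω v (f v)

/-- The component of the root `b`: vertices reaching `b` under `f`. -/
noncomputable def comp (f : V → V) (b : V) : Finset V :=
  Finset.univ.filter (fun z => Reaches f z b)

/-! ### Undirected weighted graphs, edges as unordered pairs -/

/-- Weighted degree in an undirected weighted graph given by `ωs : Sym2 V → ℝ`. -/
noncomputable def degS (ωs : Sym2 V → ℝ) (u : V) : ℝ := ∑ v, ωs s(u, v)

/-- The volume of an undirected weighted graph. -/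
noncomputable def volS (ωs : Sym2 V → ℝ) : ℝ := ∑ u, degS ωs u

/-- Connectivity of an undirected weighted graph. -/
def ConnectedW (ωs : Sym2 V → ℝ) : Prop :=
  ∀ u v : V, Relation.ReflTransGen (fun a b => 0 < ωs s(a, b)) u v

/-- An edge set `E` is a spanning tree of the weighted undirected graph `ωs`. -/
def IsWTree (ωs : Sym2 V → ℝ) (E : Finset (Sym2 V)) : Prop :=
  (∀ e ∈ E, 0 < ωs e) ∧ (SimpleGraph.fromEdgeSet (E : Set (Sym2 V))).IsAcyclic ∧
    (SimpleGraph.fromEdgeSet (E : Set (Sym2 V))).Connected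

/-- An edge set `E` is a spanning 2-forest of the weighted undirected graph `ωs`
(acyclic, with exactly two connected components). -/
def IsWTwoForest (ωs : Sym2 V → ℝ) (E : Finset (Sym2 V)) : Prop :=
  (∀ e ∈ E, 0 < ωs e) ∧ (SimpleGraph.fromEdgeSet (E : Set (Sym2 V))).IsAcyclic ∧
    Nat.card (SimpleGraph.fromEdgeSet (E : Set (Sym2 V))).ConnectedComponent = 2

/-- The weight of a subgraph given by an edge set. -/
noncomputable def wgt (ωs : Sym2 V → ℝ) (E : Finset (Sym2 V)) : ℝ := ∏ e ∈ E, ωs e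

/-- Total weight of spanning trees of the weighted undirected graph `ωs`. -/
noncomputable def tauW (ωs : Sym2 V → ℝ) : ℝ :=
  ∑ E ∈ Finset.univ.filter (fun E : Finset (Sym2 V) => IsWTree ωs E), wgt ωs E

/-- The combinatorial Laplacian of a weighted undirected graph. -/
noncomputable def lapW (ωs : Sym2 V → ℝ) : Matrix V V ℝ :=
  Matrix.of fun u v => (if u = v then degS ωs u else 0) - ωs s(u, v)

/-! ### Simple graphs -/

/-- An edge set `E` is a spanning tree of the simple graph `G`. -/
def IsSTree (G : SimpleGraph V) (E : Finset (Sym2 V)) : Prop :=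
  (E : Set (Sym2 V)) ⊆ G.edgeSet ∧ (SimpleGraph.fromEdgeSet (E : Set (Sym2 V))).IsAcyclic ∧
    (SimpleGraph.fromEdgeSet (E : Set (Sym2 V))).Connected

/-- An edge set `E` is a spanning 2-forest of the simple graph `G`. -/
def IsSTwoForest (G : SimpleGraph V) (E : Finset (Sym2 V)) : Prop :=
  (E : Set (Sym2 V)) ⊆ G.edgeSet ∧ (SimpleGraph.fromEdgeSet (E : Set (Sym2 V))).IsAcyclic ∧
    Nat.card (SimpleGraph.fromEdgeSet (E : Set (Sym2 V))).ConnectedComponent = 2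

/-- The number of spanning trees of the simple graph `G`. -/
noncomputable def treeCount (G : SimpleGraph V) : ℕ :=
  (Finset.univ.filter (fun E : Finset (Sym2 V) => IsSTree G E)).card

/-!
Write `Q` for the forest matrix, whose `(v, w)` entry is the bracket of the formula, so that
the claim reads `𝒢 = D^{1/2} Q D^{1/2} / (vol² Γ · τ)`. Since the Moore–Penrose inverse is unique,
it suffices to check the Penrose conditions for this matrix, and they reduce to two identities:
`Q d = 0`, which holds forest by forest, and `L Q = vol Γ · τ · (vol Γ · I - d 𝟙ᵀ)`. For the
latter, applying `L` to the contribution of a single 2-forest leaves only the edges `uy` that join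
its two trees. Adding such an edge to the forest gives a spanning tree containing `uy`, and deleting
`uy` from such a tree gives the forest back. For a fixed spanning tree, the volumes of its branches
at `u` add up to `vol Γ - d_u`, and exactly one branch contains `w` unless `w = u`.
-/

end Paper

namespace SimpleGraph

section TwoComponents

variable {V : Type*} {H : SimpleGraph V}

lemma card_connectedComponent_eq_two {a b : V} (hab : ¬H.Reachable a b)
    (hcover : ∀ z, H.Reachable z a ∨ H.Reachable z b) : Nat.card H.ConnectedComponent = 2 := by
  refine Nat.card_eq_two_iff.2 ⟨H.connectedComponentMk a, H.connectedComponentMk b,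
    fun h => hab (ConnectedComponent.eq.1 h), Set.eq_univ_of_forall fun c => ?_⟩
  induction c using ConnectedComponent.ind with
  | h z => exact (hcover z).imp ConnectedComponent.sound ConnectedComponent.sound

lemma reachable_or_reachable_of_card_eq_two (h2 : Nat.card H.ConnectedComponent = 2) {a b : V}
    (hab : ¬H.Reachable a b) (z : V) : H.Reachable z a ∨ H.Reachable z b := by
  obtain ⟨c, -, hc⟩ := (Nat.card_eq_two_iff' (H.connectedComponentMk a)).1 h2
  by_contra! hz
  have hb := hc _ fun h => hab (ConnectedComponent.eq.1 h).symm
  have hz' := hc _ fun h => hz.1 (ConnectedComponent.eq.1 h)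
  exact hz.2 (ConnectedComponent.eq.1 (hz'.trans hb.symm))

end TwoComponents

section EdgeOperations

variable {V : Type*} {H : SimpleGraph V} {u x y z : V}

lemma reachable_or_reachable_deleteEdges : ∀ {z : V}, H.Walk z x →
    (H.deleteEdges {s(x, y)}).Reachable z x ∨ (H.deleteEdges {s(x, y)}).Reachable z y
  | _, .nil => Or.inl .rfl
  | z, .cons (v := a) hza p => by
    by_cases he : s(z, a) = s(x, y)
    · rcases Sym2.eq_iff.1 he with ⟨rfl, -⟩ | ⟨rfl, -⟩
      · exact Or.inl .rfl
      · exact Or.inr .rfl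
    · have hza' : (H.deleteEdges {s(x, y)}).Adj z a := by simp [hza, he]
      exact (reachable_or_reachable_deleteEdges p).imp hza'.reachable.trans hza'.reachable.trans

lemma IsAcyclic.not_reachable_deleteEdges (hH : H.IsAcyclic) (hxy : H.Adj x y) :
    ¬(H.deleteEdges {s(x, y)}).Reachable x y :=
  isAcyclic_iff_forall_adj_isBridge.1 hH hxy

lemma IsTree.existsUnique_branch (hH : H.IsTree) (hz : z ≠ u) :
    ∃! y, H.Adj u y ∧ (H.deleteEdges {s(u, y)}).Reachable z y := by
  obtain ⟨p, hp⟩ := hH.connected.exists_isPath u z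
  cases p with
  | nil => exact absurd rfl hz
  | @cons _ y₀ _ hadj q =>
    rw [Walk.cons_isPath_iff] at hp
    refine ⟨y₀, ⟨hadj, ?_⟩, fun y ⟨huy, hzy⟩ => ?_⟩
    · refine (reachable_deleteEdges_iff_exists_walk.2 ⟨q, fun he => hp.2 ?_⟩).symm
      exact q.fst_mem_support_of_mem_edges he
    · have hmem : s(u, y) ∈ (Walk.cons hadj q).edges := by
        by_contra hne
        exact hH.isAcyclic.not_reachable_deleteEdges huy
          ((reachable_deleteEdges_iff_exists_walk.2 ⟨_, hne⟩).trans hzy)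
      simpa using hH.isAcyclic.eq_snd_of_adj_start (hp.1.cons hp.2) huy
        ((Walk.cons hadj q).snd_mem_support_of_mem_edges hmem)

lemma IsTree.card_connectedComponent_deleteEdges (hH : H.IsTree) (hxy : H.Adj x y) :
    Nat.card (H.deleteEdges {s(x, y)}).ConnectedComponent = 2 :=
  card_connectedComponent_eq_two (hH.isAcyclic.not_reachable_deleteEdges hxy) fun z =>
    reachable_or_reachable_deleteEdges (hH.connected.preconnected z x).some

lemma fromEdgeSet_insert (s : Set (Sym2 V)) (x y : V) :
    fromEdgeSet (insert s(x, y) s) = fromEdgeSet s ⊔ edge x y := by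
  rw [Set.insert_eq, fromEdgeSet_union, sup_comm, edge]

lemma connected_sup_edge_of_card_eq_two (h2 : Nat.card H.ConnectedComponent = 2)
    (hxy : ¬H.Reachable x y) : (H ⊔ edge x y).Connected := by
  have hne : x ≠ y := fun h => hxy (h ▸ .rfl)
  have hyx : (H ⊔ edge x y).Reachable y x :=
    (Adj.reachable (Or.inr ((edge_adj x y x y).2 ⟨Or.inl ⟨rfl, rfl⟩, hne⟩))).symm
  have hx : ∀ z, (H ⊔ edge x y).Reachable z x := fun z =>
    (reachable_or_reachable_of_card_eq_two h2 hxy z).elim (·.mono le_sup_left)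
      fun h => (h.mono le_sup_left).trans hyx
  have := Nonempty.intro x
  exact ⟨fun a b => (hx a).trans (hx b).symm⟩

end EdgeOperations

lemma lapMatrix_mulVec_apply_eq_sum {V R : Type*} [Fintype V] [DecidableEq V] [NonAssocRing R]
    (G : SimpleGraph V) [DecidableRel G.Adj] (x : V → R) (u : V) :
    (G.lapMatrix R *ᵥ x) u = ∑ y ∈ G.neighborFinset u, (x u - x y) := by
  rw [lapMatrix_mulVec_apply, Finset.sum_sub_distrib, Finset.sum_const,
    card_neighborFinset_eq_degree, nsmul_eq_mul]

end SimpleGraph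

open SimpleGraph

namespace Paper

section SpanningForests

variable {V : Type*} {G : SimpleGraph V}

lemma fromEdgeSet_adj_iff {E : Finset (Sym2 V)} (hE : (E : Set (Sym2 V)) ⊆ G.edgeSet) {x y : V} :
    (fromEdgeSet (E : Set (Sym2 V))).Adj x y ↔ s(x, y) ∈ E :=
  ⟨fun h => h.1, fun h => ⟨h, (G.mem_edgeSet.1 (hE h)).ne⟩⟩

lemma IsSTree.isTree {T : Finset (Sym2 V)} (hT : IsSTree G T) :
    (fromEdgeSet (T : Set (Sym2 V))).IsTree :=
  ⟨hT.2.2, hT.2.1⟩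

lemma treeCount_pos [Fintype V] (hconn : G.Connected) : 0 < treeCount G := by
  classical
  obtain ⟨T, hle, hT⟩ := hconn.exists_isTree_le
  refine Finset.card_pos.2 ⟨T.edgeFinset, Finset.mem_filter.2 ⟨Finset.mem_univ _, ?_⟩⟩
  rw [IsSTree, coe_edgeFinset, fromEdgeSet_edgeSet]
  exact ⟨edgeSet_mono hle, hT.isAcyclic, hT.connected⟩

variable [DecidableEq V]

lemma fromEdgeSet_erase (E : Finset (Sym2 V)) (e : Sym2 V) :
    fromEdgeSet (E.erase e : Set (Sym2 V)) = (fromEdgeSet (E : Set (Sym2 V))).deleteEdges {e} := by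
  rw [deleteEdges_fromEdgeSet, Finset.coe_erase]

lemma IsSTree.not_reachable_erase {T : Finset (Sym2 V)} (hT : IsSTree G T) {x y : V}
    (hxy : s(x, y) ∈ T) : ¬(fromEdgeSet (T.erase s(x, y) : Set (Sym2 V))).Reachable x y := by
  rw [fromEdgeSet_erase]
  exact hT.2.1.not_reachable_deleteEdges ((fromEdgeSet_adj_iff hT.1).2 hxy)

lemma IsSTree.isSTwoForest_erase {T : Finset (Sym2 V)} (hT : IsSTree G T) {x y : V}
    (hxy : s(x, y) ∈ T) : IsSTwoForest G (T.erase s(x, y)) := by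
  refine ⟨(Finset.coe_subset.2 (T.erase_subset _)).trans hT.1,
    hT.2.1.anti (fromEdgeSet_mono (Finset.coe_subset.2 (T.erase_subset _))), ?_⟩
  rw [fromEdgeSet_erase]
  exact hT.isTree.card_connectedComponent_deleteEdges ((fromEdgeSet_adj_iff hT.1).2 hxy)

lemma IsSTwoForest.isSTree_insert {F : Finset (Sym2 V)} (hF : IsSTwoForest G F) {x y : V}
    (hxy : G.Adj x y) (hnr : ¬(fromEdgeSet (F : Set (Sym2 V))).Reachable x y) :
    IsSTree G (insert s(x, y) F) := by
  simp only [IsSTree, Finset.coe_insert, fromEdgeSet_insert]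
  exact ⟨Set.insert_subset hxy hF.1, hF.2.1.sup_edge_of_not_reachable hnr,
    connected_sup_edge_of_card_eq_two hF.2.2 hnr⟩

end SpanningForests

section Branches

variable {V : Type*} [Fintype V] [DecidableEq V] {G : SimpleGraph V} {T : Finset (Sym2 V)}

lemma IsSTree.card_branches (hT : IsSTree G T) (u z : V) :
    #{y | s(u, y) ∈ T ∧ (fromEdgeSet (T.erase s(u, y) : Set (Sym2 V))).Reachable z y} =
      if z = u then 0 else 1 := by
  split_ifs with hz
  · subst hz
    exact Finset.card_eq_zero.2 (Finset.filter_eq_empty_iff.2 fun y _ h =>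
      hT.not_reachable_erase h.1 h.2)
  · obtain ⟨y₀, hy₀, huniq⟩ := hT.isTree.existsUnique_branch hz
    simp only [fromEdgeSet_adj_iff hT.1, ← fromEdgeSet_erase] at hy₀ huniq
    refine Finset.card_eq_one.2 ⟨y₀, Finset.eq_singleton_iff_unique_mem.2 ⟨?_, fun y hy => ?_⟩⟩
    · exact Finset.mem_filter.2 ⟨Finset.mem_univ _, hy₀⟩
    · exact huniq y (Finset.mem_filter.1 hy).2

lemma sum_isSTwoForest_eq_sum_isSTree {u y : V} (huy : G.Adj u y) (f : Finset (Sym2 V) → ℝ) :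
    ∑ E with IsSTwoForest G E ∧ ¬(fromEdgeSet (E : Set (Sym2 V))).Reachable u y, f E =
      ∑ T with IsSTree G T ∧ s(u, y) ∈ T, f (T.erase s(u, y)) := by
  have hnotMem {E : Finset (Sym2 V)} (h : ¬(fromEdgeSet (E : Set (Sym2 V))).Reachable u y) :
      s(u, y) ∉ E := fun he => h (Adj.reachable ⟨he, huy.ne⟩)
  refine Finset.sum_nbij' (insert s(u, y)) (·.erase s(u, y)) ?_ ?_ ?_ ?_ ?_ <;>
    simp only [Finset.mem_filter, Finset.mem_univ, true_and]
  · exact fun E ⟨hE, hnr⟩ => ⟨hE.isSTree_insert huy hnr, Finset.mem_insert_self _ _⟩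
  · exact fun T ⟨hT, he⟩ => ⟨hT.isSTwoForest_erase he, hT.not_reachable_erase he⟩
  · exact fun E ⟨_, hnr⟩ => Finset.erase_insert (hnotMem hnr)
  · exact fun T ⟨_, he⟩ => Finset.insert_erase he
  · exact fun E ⟨_, hnr⟩ => by rw [Finset.erase_insert (hnotMem hnr)]

end Branches

section ComponentVolumes

variable {V : Type*} [Fintype V] [DecidableEq V] (d : V → ℝ)

noncomputable def compVol (E : Finset (Sym2 V)) (a : V) : ℝ :=
  ∑ z with (fromEdgeSet (E : Set (Sym2 V))).Reachable z a, d z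

/-- The contribution of the spanning 2-forest `E` to the forest matrix: `vol² T₂` when `v` and
`w` lie in the same tree `T₁` of `E`, and `-vol T₁ · vol T₂` when `v ∈ T₁` and `w ∈ T₂`. -/
noncomputable def forestEntry (E : Finset (Sym2 V)) (v w : V) : ℝ :=
  if (fromEdgeSet (E : Set (Sym2 V))).Reachable v w then (∑ z, d z - compVol d E v) ^ 2
  else -(compVol d E v * compVol d E w)

noncomputable def cutTerm (E : Finset (Sym2 V)) (y w : V) : ℝ :=
  compVol d E y - if (fromEdgeSet (E : Set (Sym2 V))).Reachable y w then ∑ z, d z else 0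

variable {d} {E : Finset (Sym2 V)}

lemma compVol_congr {a b : V} (h : (fromEdgeSet (E : Set (Sym2 V))).Reachable a b) :
    compVol d E a = compVol d E b :=
  Finset.sum_congr (Finset.filter_congr fun _ _ => ⟨(·.trans h), (·.trans h.symm)⟩) fun _ _ => rfl

lemma compVol_of_not_reachable
    (h2 : Nat.card (fromEdgeSet (E : Set (Sym2 V))).ConnectedComponent = 2) {a b : V} (hab : ¬(fromEdgeSet (E : Set (Sym2 V))).Reachable a b) :
    compVol d E b = ∑ z, d z - compVol d E a := by
  rw [eq_sub_iff_add_eq, compVol, compVol, add_comm, ← Finset.sum_filter_add_sum_filter_not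
    Finset.univ fun z => (fromEdgeSet (E : Set (Sym2 V))).Reachable z a]
  congr 2
  refine Finset.filter_congr fun z _ => ⟨fun hzb hza => hab (hza.symm.trans hzb), fun hza => ?_⟩
  exact (reachable_or_reachable_of_card_eq_two h2 hab z).resolve_left hza

lemma forestEntry_comm (v w : V) : forestEntry d E v w = forestEntry d E w v := by
  by_cases h : (fromEdgeSet (E : Set (Sym2 V))).Reachable v w
  · simp [forestEntry, h, h.symm, compVol_congr h]
  · have h' : ¬(fromEdgeSet (E : Set (Sym2 V))).Reachable w v := fun h' => h h'.symm
    simp [forestEntry, h, h', mul_comm]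

variable (h2 : Nat.card (fromEdgeSet (E : Set (Sym2 V))).ConnectedComponent = 2)
include h2

lemma forestEntry_eq (v w : V) :
    forestEntry d E v w = (∑ z, d z - compVol d E w) * ((if
      (fromEdgeSet (E : Set (Sym2 V))).Reachable v w then ∑ z, d z else 0) - compVol d E w) := by
  by_cases h : (fromEdgeSet (E : Set (Sym2 V))).Reachable v w
  · simp [forestEntry, h, compVol_congr h]; ring
  · simp [forestEntry, h, compVol_of_not_reachable h2 fun h' => h h'.symm]

lemma sum_forestEntry_mul (u : V) : ∑ v, forestEntry d E u v * d v = 0 := by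
  have hc : ∑ v, (if (fromEdgeSet (E : Set (Sym2 V))).Reachable v u then ∑ z, d z else 0) * d v =
      (∑ z, d z) * compVol d E u := by
    simp [compVol, Finset.mul_sum, Finset.sum_filter, ite_mul]
  simp_rw [forestEntry_comm u, forestEntry_eq h2 _ u, mul_assoc, ← Finset.mul_sum, sub_mul,
    Finset.sum_sub_distrib, hc, ← Finset.mul_sum]
  ring

lemma forestEntry_sub (u y w : V) :
    forestEntry d E u w - forestEntry d E y w = (∑ z, d z) *
      (if (fromEdgeSet (E : Set (Sym2 V))).Reachable u y then 0 else cutTerm d E y w) := by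
  rw [forestEntry_eq h2, forestEntry_eq h2, cutTerm]
  by_cases huy : (fromEdgeSet (E : Set (Sym2 V))).Reachable u y
  · have : (fromEdgeSet (E : Set (Sym2 V))).Reachable u w ↔
        (fromEdgeSet (E : Set (Sym2 V))).Reachable y w := ⟨huy.symm.trans, huy.trans⟩
    simp [huy, this]
  have hy := compVol_of_not_reachable (d := d) h2 huy
  by_cases hyw : (fromEdgeSet (E : Set (Sym2 V))).Reachable y w
  · have huw : ¬(fromEdgeSet (E : Set (Sym2 V))).Reachable u w := fun h => huy (h.trans hyw.symm)
    simp [huy, hyw, huw, ← compVol_congr (d := d) hyw, hy]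
    ring
  · have hwu : (fromEdgeSet (E : Set (Sym2 V))).Reachable w u :=
      (reachable_or_reachable_of_card_eq_two h2 huy w).resolve_right fun h => hyw h.symm
    simp [huy, hyw, hwu.symm, compVol_congr (d := d) hwu, hy]
    ring

end ComponentVolumes

section TreeSums

variable {V : Type*} [Fintype V] [DecidableEq V] {G : SimpleGraph V} {T : Finset (Sym2 V)}
  (d : V → ℝ)

lemma IsSTree.sum_compVol_branches (hT : IsSTree G T) (u : V) :
    ∑ y with s(u, y) ∈ T, compVol d (T.erase s(u, y)) y = ∑ z, d z - d u := by
  unfold compVol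
  rw [Finset.sum_comm' (t' := Finset.univ) (s' := fun z => {y | s(u, y) ∈ T ∧
    (fromEdgeSet (T.erase s(u, y) : Set (Sym2 V))).Reachable z y}) (by simp)]
  simp only [Finset.sum_const, hT.card_branches, ite_smul, zero_smul, one_smul]
  rw [Finset.sum_ite, Finset.sum_const_zero, zero_add, Finset.filter_ne',
    Finset.sum_erase_eq_sub (Finset.mem_univ u)]

lemma IsSTree.sum_cutTerm_branches (hT : IsSTree G T) (u w : V) :
    ∑ y with s(u, y) ∈ T, cutTerm d (T.erase s(u, y)) y w =
      (if u = w then ∑ z, d z else 0) - d u := by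
  simp only [cutTerm]
  rw [Finset.sum_sub_distrib, hT.sum_compVol_branches, Finset.sum_ite, Finset.sum_const_zero,
    add_zero, Finset.sum_const, Finset.filter_filter]
  simp_rw [reachable_comm (v := w)]
  rw [hT.card_branches]
  rcases eq_or_ne u w with rfl | huw
  · simp
  · simp [huw, huw.symm]

end TreeSums

section Degrees

variable {V : Type*} [Fintype V] {G : SimpleGraph V} [DecidableRel G.Adj]

variable (G) in
noncomputable def degrees (z : V) : ℝ := G.degree z

variable (G) in
noncomputable def sqrtDegrees (z : V) : ℝ := √(degrees G z)

lemma degrees_nonneg (z : V) : 0 ≤ degrees G z := Nat.cast_nonneg _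

lemma sqrtDegrees_mul_self (z : V) : sqrtDegrees G z * sqrtDegrees G z = degrees G z :=
  Real.mul_self_sqrt (degrees_nonneg z)

lemma degrees_eq_zero [Subsingleton V] (z : V) : degrees G z = 0 :=
  Nat.cast_eq_zero.2 <| Nat.eq_zero_of_not_pos fun h =>
    let ⟨y, hy⟩ := (G.degree_pos_iff_exists_adj z).1 h; hy.ne (Subsingleton.elim z y)

lemma sqrtDegrees_eq_zero [Subsingleton V] : sqrtDegrees G = 0 :=
  funext fun z => by rw [sqrtDegrees, degrees_eq_zero, Real.sqrt_zero, Pi.zero_apply]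

lemma degrees_pos (hconn : G.Connected) [Nontrivial V] (z : V) : 0 < degrees G z := by
  obtain ⟨y, hy⟩ := hconn.preconnected.exists_adj_of_nontrivial z
  exact Nat.cast_pos.2 ((G.degree_pos_iff_exists_adj z).2 ⟨y, hy⟩)

lemma inv_sqrtDegrees_mul_self (hconn : G.Connected) [Nontrivial V] (z : V) :
    (sqrtDegrees G z)⁻¹ * sqrtDegrees G z = 1 :=
  inv_mul_cancel₀ (Real.sqrt_pos.2 (degrees_pos hconn z)).ne'

end Degrees

section ForestMatrix

variable {V : Type*} [Fintype V] [DecidableEq V] (G : SimpleGraph V) [DecidableRel G.Adj]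

noncomputable def forestMatrix : Matrix V V ℝ :=
  of fun v w => ∑ E with IsSTwoForest G E, forestEntry (degrees G) E v w

variable {G}

lemma lapMatrix_mul_forestMatrix_eq_sum_cutTerm (u w : V) :
    (G.lapMatrix ℝ * forestMatrix G) u w = (∑ z, degrees G z) *
      ∑ E with IsSTwoForest G E, ∑ y ∈ G.neighborFinset u with
        ¬(fromEdgeSet (E : Set (Sym2 V))).Reachable u y, cutTerm (degrees G) E y w := by
  have hcol : (fun v => forestMatrix G v w) =
      ∑ E with IsSTwoForest G E, fun v => forestEntry (degrees G) E v w := by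
    ext v; simp [forestMatrix, Finset.sum_apply]
  change (G.lapMatrix ℝ *ᵥ fun v => forestMatrix G v w) u = _
  rw [hcol, Matrix.mulVec_sum, Finset.sum_apply, Finset.mul_sum]
  refine Finset.sum_congr rfl fun E hE => ?_
  rw [lapMatrix_mulVec_apply_eq_sum, Finset.sum_filter, Finset.mul_sum]
  refine Finset.sum_congr rfl fun y _ => ?_
  rw [forestEntry_sub (Finset.mem_filter.1 hE).2.2.2]
  split_ifs <;> simp

lemma sum_cutTerm_eq (u w : V) :
    ∑ E with IsSTwoForest G E, ∑ y ∈ G.neighborFinset u with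
        ¬(fromEdgeSet (E : Set (Sym2 V))).Reachable u y, cutTerm (degrees G) E y w =
      treeCount G * ((if u = w then ∑ z, degrees G z else 0) - degrees G u) := by
  calc _ = ∑ y ∈ G.neighborFinset u, ∑ E with IsSTwoForest G E ∧
          ¬(fromEdgeSet (E : Set (Sym2 V))).Reachable u y, cutTerm (degrees G) E y w :=
        Finset.sum_comm' fun E y => by
          simp only [Finset.mem_filter, Finset.mem_univ, true_and, mem_neighborFinset]; tauto
    _ = ∑ y ∈ G.neighborFinset u, ∑ T with IsSTree G T ∧ s(u, y) ∈ T,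
          cutTerm (degrees G) (T.erase s(u, y)) y w :=
        Finset.sum_congr rfl fun y hy =>
          sum_isSTwoForest_eq_sum_isSTree ((G.mem_neighborFinset u y).1 hy) _
    _ = ∑ T with IsSTree G T, ∑ y with s(u, y) ∈ T, cutTerm (degrees G) (T.erase s(u, y)) y w :=
        Finset.sum_comm' fun y T => by
          simp only [Finset.mem_filter, Finset.mem_univ, true_and, mem_neighborFinset]
          exact ⟨fun ⟨_, hT, he⟩ => ⟨he, hT⟩, fun ⟨he, hT⟩ => ⟨hT.1 he, hT, he⟩⟩
    _ = _ := by
        rw [Finset.sum_congr rfl fun T hT => (Finset.mem_filter.1 hT).2.sum_cutTerm_branches _ u w,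
          Finset.sum_const, nsmul_eq_mul, treeCount]

lemma lapMatrix_mul_forestMatrix_apply (u w : V) :
    (G.lapMatrix ℝ * forestMatrix G) u w = (∑ z, degrees G z) * treeCount G *
      ((if u = w then ∑ z, degrees G z else 0) - degrees G u) := by
  rw [lapMatrix_mul_forestMatrix_eq_sum_cutTerm, sum_cutTerm_eq, mul_assoc]

lemma forestMatrix_mulVec_degrees : forestMatrix G *ᵥ degrees G = 0 := by
  ext u
  simp only [mulVec, dotProduct, forestMatrix, of_apply, Finset.sum_mul, Pi.zero_apply]
  rw [Finset.sum_comm]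
  exact Finset.sum_eq_zero fun E hE => sum_forestEntry_mul (Finset.mem_filter.1 hE).2.2.2 u

lemma forestMatrix_transpose : (forestMatrix G)ᵀ = forestMatrix G := by
  ext v w
  exact Finset.sum_congr rfl fun E _ => forestEntry_comm w v

lemma forestMatrix_apply (u v : V) : forestMatrix G u v =
    (∑ E ∈ Finset.univ.filter (fun E : Finset (Sym2 V) =>
          IsSTwoForest G E ∧ (SimpleGraph.fromEdgeSet (E : Set (Sym2 V))).Reachable u v),
        (∑ z ∈ Finset.univ.filter (fun z : V =>
            ¬ (SimpleGraph.fromEdgeSet (E : Set (Sym2 V))).Reachable z u),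
          (G.degree z : ℝ)) ^ 2)
     - (∑ E ∈ Finset.univ.filter (fun E : Finset (Sym2 V) =>
          IsSTwoForest G E ∧ ¬ (SimpleGraph.fromEdgeSet (E : Set (Sym2 V))).Reachable u v),
        (∑ z ∈ Finset.univ.filter (fun z : V =>
            (SimpleGraph.fromEdgeSet (E : Set (Sym2 V))).Reachable z u),
          (G.degree z : ℝ)) *
        (∑ z ∈ Finset.univ.filter (fun z : V =>
            (SimpleGraph.fromEdgeSet (E : Set (Sym2 V))).Reachable z v),
          (G.degree z : ℝ))) := by
  have hcompl (E : Finset (Sym2 V)) : ∑ z, degrees G z - compVol (degrees G) E u =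
      ∑ z with ¬(fromEdgeSet (E : Set (Sym2 V))).Reachable z u, degrees G z := by
    rw [compVol, ← Finset.sum_filter_add_sum_filter_not Finset.univ
      fun z => (fromEdgeSet (E : Set (Sym2 V))).Reachable z u, add_sub_cancel_left]
  simp only [forestMatrix, of_apply, forestEntry, Finset.sum_ite, Finset.filter_filter, hcompl,
    Finset.sum_neg_distrib, ← sub_eq_add_neg]
  rfl

end ForestMatrix

section MoorePenrose

variable {V : Type*} [Fintype V] {M X X₁ X₂ : Matrix V V ℝ}

lemma IsMoorePenrose.unique (h₁ : IsMoorePenrose M X₁) (h₂ : IsMoorePenrose M X₂) : X₁ = X₂ := by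
  obtain ⟨a₁, b₁, c₁, d₁⟩ := h₁
  obtain ⟨a₂, b₂, c₂, d₂⟩ := h₂
  have hMX : M * X₁ = M * X₂ := calc
    M * X₁ = (M * X₂ * M * X₁)ᵀ := by rw [a₂, c₁]
    _ = (M * X₁)ᵀ * (M * X₂)ᵀ := by rw [← transpose_mul]; simp only [Matrix.mul_assoc]
    _ = M * X₁ * M * X₂ := by rw [c₁, c₂]; simp only [Matrix.mul_assoc]
    _ = M * X₂ := by rw [a₁]
  have hXM : X₁ * M = X₂ * M := calc
    X₁ * M = (X₁ * (M * X₂ * M))ᵀ := by rw [a₂, d₁]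
    _ = (X₂ * M)ᵀ * (X₁ * M)ᵀ := by rw [← transpose_mul]; simp only [Matrix.mul_assoc]
    _ = X₂ * (M * X₁ * M) := by rw [d₁, d₂]; simp only [Matrix.mul_assoc]
    _ = X₂ * M := by rw [a₁]
  calc X₁ = X₂ * (M * X₂) := by rw [← b₁, hXM, Matrix.mul_assoc, hMX]
    _ = X₂ := by rw [← Matrix.mul_assoc, b₂]

lemma isMoorePenrose_of_mul_eq_one_sub [DecidableEq V] {p : V → ℝ} {c : ℝ} (hM : Mᵀ = M)
    (hX : Xᵀ = X) (hMp : M *ᵥ p = 0) (hXp : X *ᵥ p = 0) (hMX : M * X = 1 - c • vecMulVec p p) :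
    IsMoorePenrose M X := by
  have hP {A : Matrix V V ℝ} (hA : Aᵀ = A) (hAp : A *ᵥ p = 0) : c • vecMulVec p p * A = 0 := by
    rw [smul_mul, vecMulVec_mul, ← mulVec_transpose, hA, hAp, vecMulVec_zero, smul_zero]
  have hsymm : (1 - c • vecMulVec p p)ᵀ = 1 - c • vecMulVec p p := by
    rw [transpose_sub, transpose_one, transpose_smul, transpose_vecMulVec]
  have hXM : X * M = 1 - c • vecMulVec p p := by
    rw [← hsymm, ← hMX, transpose_mul, hM, hX]
  refine ⟨?_, ?_, ?_, ?_⟩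
  · rw [hMX, sub_mul, one_mul, hP hM hMp, sub_zero]
  · rw [hXM, sub_mul, one_mul, hP hX hXp, sub_zero]
  · rw [hMX, hsymm]
  · rw [hXM, hsymm]

end MoorePenrose

section GreenFunction

variable {V : Type*} [Fintype V] [DecidableEq V] (G : SimpleGraph V) [DecidableRel G.Adj]

noncomputable def normLapMatrix : Matrix V V ℝ :=
  diagonal (fun w => (sqrtDegrees G w)⁻¹) * G.lapMatrix ℝ * diagonal (fun w => (sqrtDegrees G w)⁻¹)

noncomputable def forestGreen : Matrix V V ℝ :=
  ((∑ z, degrees G z) ^ 2 * treeCount G)⁻¹ •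
    (diagonal (sqrtDegrees G) * forestMatrix G * diagonal (sqrtDegrees G))

variable {G}

lemma forestGreen_apply (u v : V) : forestGreen G u v =
    √(degrees G u * degrees G v) / ((∑ z, degrees G z) ^ 2 * treeCount G) * forestMatrix G u v := by
  rw [Real.sqrt_mul (degrees_nonneg u)]
  simp only [forestGreen, sqrtDegrees, Matrix.smul_apply, mul_diagonal, diagonal_mul, smul_eq_mul]
  ring

lemma normLapMatrix_transpose : (normLapMatrix G)ᵀ = normLapMatrix G := by
  simp only [normLapMatrix, transpose_mul, diagonal_transpose, (isSymm_lapMatrix ℝ G).eq,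
    Matrix.mul_assoc]

lemma forestGreen_transpose : (forestGreen G)ᵀ = forestGreen G := by
  simp only [forestGreen, transpose_smul, transpose_mul, diagonal_transpose,
    forestMatrix_transpose, Matrix.mul_assoc]

lemma forestGreen_mulVec_sqrtDegrees : forestGreen G *ᵥ sqrtDegrees G = 0 := by
  have : diagonal (sqrtDegrees G) *ᵥ sqrtDegrees G = degrees G :=
    funext fun z => by rw [mulVec_diagonal, sqrtDegrees_mul_self]
  rw [forestGreen, smul_mulVec, ← mulVec_mulVec, ← mulVec_mulVec, this,
    forestMatrix_mulVec_degrees, mulVec_zero, smul_zero]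

lemma normLapMatrix_mulVec_sqrtDegrees (hconn : G.Connected) [Nontrivial V] :
    normLapMatrix G *ᵥ sqrtDegrees G = 0 := by
  have : diagonal (fun w => (sqrtDegrees G w)⁻¹) *ᵥ sqrtDegrees G = fun _ => 1 :=
    funext fun z => by rw [mulVec_diagonal, inv_sqrtDegrees_mul_self hconn]
  rw [normLapMatrix, ← mulVec_mulVec, ← mulVec_mulVec, this, lapMatrix_mulVec_const_eq_zero,
    mulVec_zero]

lemma normLapMatrix_mul_forestGreen (hconn : G.Connected) [Nontrivial V] :
    normLapMatrix G * forestGreen G =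
      1 - (∑ z, degrees G z)⁻¹ • vecMulVec (sqrtDegrees G) (sqrtDegrees G) := by
  have hsr : diagonal (fun w => (sqrtDegrees G w)⁻¹) * diagonal (sqrtDegrees G) = 1 := by
    rw [diagonal_mul_diagonal, ← diagonal_one]
    exact congrArg diagonal (funext (inv_sqrtDegrees_mul_self hconn))
  have hsplit : normLapMatrix G * forestGreen G = ((∑ z, degrees G z) ^ 2 * treeCount G)⁻¹ •
      (diagonal (fun w => (sqrtDegrees G w)⁻¹) * (G.lapMatrix ℝ * forestMatrix G) *
        diagonal (sqrtDegrees G)) := by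
    simp only [normLapMatrix, forestGreen, Matrix.mul_smul, Matrix.mul_assoc]
    rw [← Matrix.mul_assoc (diagonal _) (diagonal _), hsr, Matrix.one_mul]
  have hvol : 0 < ∑ z, degrees G z :=
    Finset.sum_pos (fun z _ => degrees_pos hconn z) Finset.univ_nonempty
  have hτ : (0 : ℝ) < treeCount G := Nat.cast_pos.2 (treeCount_pos hconn)
  ext u w
  rw [hsplit]
  simp only [Matrix.smul_apply, mul_diagonal, diagonal_mul, lapMatrix_mul_forestMatrix_apply,
    Matrix.sub_apply, one_apply, vecMulVec_apply, smul_eq_mul]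
  have hu : sqrtDegrees G u ≠ 0 := (Real.sqrt_pos.2 (degrees_pos hconn u)).ne'
  rw [← sqrtDegrees_mul_self u]
  split_ifs with huw
  · subst huw
    field_simp
  · field_simp
    ring

lemma isMoorePenrose_forestGreen (hconn : G.Connected) :
    IsMoorePenrose (normLapMatrix G) (forestGreen G) := by
  rcases subsingleton_or_nontrivial V with hV | hV
  · simp [IsMoorePenrose, normLapMatrix, forestGreen, sqrtDegrees_eq_zero]
  exact isMoorePenrose_of_mul_eq_one_sub normLapMatrix_transpose forestGreen_transpose
    (normLapMatrix_mulVec_sqrtDegrees hconn) forestGreen_mulVec_sqrtDegrees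
    (normLapMatrix_mul_forestGreen hconn)

/-- **Forest formula for the normalized Green's function of a connected simple graph.**
`𝒢` is the Moore–Penrose pseudoinverse of `ℒ = D^{-1/2} L D^{-1/2}`. -/
theorem normalized_green_forest_formula_simple
    {V : Type*} [Fintype V] [DecidableEq V]
    (G : SimpleGraph V) [DecidableRel G.Adj] (hconn : G.Connected)
    (𝒢 : Matrix V V ℝ)
    (h𝒢 : IsMoorePenrose
      (Matrix.diagonal (fun w => (Real.sqrt (G.degree w))⁻¹) * G.lapMatrix ℝ *
        Matrix.diagonal (fun w => (Real.sqrt (G.degree w))⁻¹)) 𝒢)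
    (u v : V) :
    𝒢 u v = (Real.sqrt ((G.degree u : ℝ) * (G.degree v : ℝ)) /
        ((∑ w, (G.degree w : ℝ)) ^ 2 * (treeCount G : ℝ))) *
      ((∑ E ∈ Finset.univ.filter (fun E : Finset (Sym2 V) =>
            IsSTwoForest G E ∧ (SimpleGraph.fromEdgeSet (E : Set (Sym2 V))).Reachable u v),
          (∑ z ∈ Finset.univ.filter (fun z : V =>
              ¬ (SimpleGraph.fromEdgeSet (E : Set (Sym2 V))).Reachable z u),
            (G.degree z : ℝ)) ^ 2)
       - (∑ E ∈ Finset.univ.filter (fun E : Finset (Sym2 V) =>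
            IsSTwoForest G E ∧ ¬ (SimpleGraph.fromEdgeSet (E : Set (Sym2 V))).Reachable u v),
          (∑ z ∈ Finset.univ.filter (fun z : V =>
              (SimpleGraph.fromEdgeSet (E : Set (Sym2 V))).Reachable z u),
            (G.degree z : ℝ)) *
          (∑ z ∈ Finset.univ.filter (fun z : V =>
              (SimpleGraph.fromEdgeSet (E : Set (Sym2 V))).Reachable z v),
            (G.degree z : ℝ)))) := by
  rw [h𝒢.unique (isMoorePenrose_forestGreen hconn), forestGreen_apply, forestMatrix_apply]
  rfl

end GreenFunction

end Paper
end

section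
/- Let M be an n×n real matrix of rank n−1 with unit vectors x and y satisfying x^*M = 0 and My = 0. Then (a) for all u, v ∈ [n]: ((−1)^{u+v}/det(M + xy^*)) · det(M_{\bar v,\bar u}) = (xy^*)(v,u), where M_{\bar v,\bar u} denotes the submatrix deleting row v and column u; and (b) if M⁺ denotes the Moore–Penrose pseudoinverse of M, then for all u, v ∈ [n]: M⁺(u,v) = ((−1)^{u+v}/det(M + xy^*)) · Σ_{c ≠ u} det((M ←_c xy^*)_{\bar v,\bar u}), where M ←_c xy^* is M with its c-th column replaced by the c-th column of xy^*. -/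
open scoped Classical
open Finset Matrix

/-!
Put `N = M + x yᵀ` and `G = M⁺ + y xᵀ`. Since `ker Mᵀ = span x`, the Penrose conditions force
`M M⁺ = 1 - x xᵀ`, and then `N G = 1`, so `adj N = det N • G`. Since also `ker M = span y`, every
matrix annihilated by `M` on both sides, in particular `adj M`, is a multiple of `y xᵀ`; the
matrix determinant lemma `det (M + x yᵀ) = det M + yᵀ (adj M) x` identifies the multiple as
`det N`, and reading off cofactors gives (a). For (b), the column-by-column form of the same lemma,
applied to the minor of `N`, turns the sum into the `(v, u)` minor of `N` minus that of `M`, i.e.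
into `det N • (G - y xᵀ) = det N • M⁺` at `(u, v)`.
-/

namespace Matrix

variable {ι : Type*} [Fintype ι]

section Determinant

variable {R : Type*} [CommRing R] [DecidableEq ι]

theorem det_add_vecMulVec_eq_add_sum_updateRow (A : Matrix ι ι R) (a b : ι → R) :
    (A + vecMulVec a b).det = A.det + ∑ i, a i * (A.updateRow i b).det := by
  suffices ∀ s : Finset ι, (A + vecMulVec (fun i => if i ∈ s then a i else 0) b).det =
      A.det + ∑ i ∈ s, a i * (A.updateRow i b).det by
    simpa using this univ
  intro s
  induction s using Finset.induction_on with
  | empty => simp [← Pi.zero_def]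
  | insert k s hk ih =>
    set B := A + vecMulVec (fun i => if i ∈ s then a i else 0) b
    have hstep : A + vecMulVec (fun i => if i ∈ insert k s then a i else 0) b =
        B.updateRow k (B k + a k • b) := by
      ext i j
      by_cases hi : i = k
      · subst hi; simp [B, hk, vecMulVec_apply]
      · simp [B, hi, vecMulVec_apply]
    -- adding multiples of the new row `b` to the other rows does not change the determinant
    have hrow : (B.updateRow k b).det = (A.updateRow k b).det := by
      refine det_eq_of_forall_row_eq_smul_add_const (fun i => if i ∈ s then a i else 0) k
        (by simp [hk]) fun i j => ?_
      by_cases hi : i = k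
      · subst hi; simp [hk]
      · simp [B, hi, vecMulVec_apply]
    rw [hstep, det_updateRow_add, det_updateRow_smul, updateRow_eq_self, hrow, ih,
      sum_insert hk]
    ring

theorem det_add_vecMulVec_eq_add_sum (A : Matrix ι ι R) (a b : ι → R) :
    (A + vecMulVec a b).det = A.det + ∑ j, b j * (A.updateCol j a).det := by
  rw [← det_transpose, transpose_add, transpose_vecMulVec,
    det_add_vecMulVec_eq_add_sum_updateRow, det_transpose]
  simp only [updateRow_transpose, det_transpose]

theorem det_add_vecMulVec (A : Matrix ι ι R) (a b : ι → R) :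
    (A + vecMulVec a b).det = A.det + b ⬝ᵥ A.adjugate *ᵥ a := by
  simp only [det_add_vecMulVec_eq_add_sum, ← cramer_eq_adjugate_mulVec, dotProduct,
    cramer_apply]

theorem sum_erase_det_submatrix_updateCol {n : ℕ} (M : Matrix (Fin (n + 1)) (Fin (n + 1)) R)
    (x y : Fin (n + 1) → R) (u v : Fin (n + 1)) :
    ∑ c ∈ univ.erase u,
        ((M.updateCol c (fun i => x i * y c)).submatrix v.succAbove u.succAbove).det =
      ((M + vecMulVec x y).submatrix v.succAbove u.succAbove).det -
        (M.submatrix v.succAbove u.succAbove).det := by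
  have hsub : (M + vecMulVec x y).submatrix v.succAbove u.succAbove =
      M.submatrix v.succAbove u.succAbove + vecMulVec (x ∘ v.succAbove) (y ∘ u.succAbove) := rfl
  have hterm : ∀ c : Fin n,
      ((M.updateCol (u.succAbove c) (fun i => x i * y (u.succAbove c))).submatrix
        v.succAbove u.succAbove).det =
      y (u.succAbove c) * ((M.submatrix v.succAbove u.succAbove).updateCol c
        (x ∘ v.succAbove)).det := by
    intro c
    rw [← det_updateCol_smul]
    congr 1
    ext i j
    simp [updateCol_apply, mul_comm]
  rw [sum_erase_eq_sub (mem_univ u), Fin.sum_univ_succAbove _ u, add_sub_cancel_left, hsub,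
    det_add_vecMulVec_eq_add_sum, add_sub_cancel_left]
  exact sum_congr rfl fun c _ => hterm c

end Determinant

theorem add_vecMulVec_mul_add_vecMulVec {R : Type*} [CommRing R] {M G : Matrix ι ι R}
    {x y : ι → R} (hMy : M *ᵥ y = 0) (hyG : y ᵥ* G = 0) (hyy : y ⬝ᵥ y = 1) :
    (M + vecMulVec x y) * (G + vecMulVec y x) = M * G + vecMulVec x x := by
  rw [Matrix.add_mul, Matrix.mul_add, Matrix.mul_add, mul_vecMulVec, vecMulVec_mul,
    vecMulVec_mul_vecMulVec, hMy, hyG, hyy, one_smul, zero_vecMulVec, vecMulVec_zero,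
    add_zero, zero_add]

section Corank

variable {K : Type*} [Field K] {M : Matrix ι ι K}

theorem ker_mulVecLin_eq_span_singleton (hrank : M.rank + 1 = Fintype.card ι) {y : ι → K}
    (hy : M *ᵥ y = 0) (hy0 : y ≠ 0) : LinearMap.ker M.mulVecLin = K ∙ y := by
  have hker : Module.finrank K (LinearMap.ker M.mulVecLin) = 1 := by
    have := LinearMap.finrank_range_add_finrank_ker M.mulVecLin
    rw [Module.finrank_fintype_fun_eq_card] at this
    change M.rank + _ = _ at this
    omega
  refine (Submodule.eq_of_le_of_finrank_le ?_ ?_).symm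
  · rwa [Submodule.span_singleton_le_iff_mem, LinearMap.mem_ker, mulVecLin_apply]
  · rw [hker, finrank_span_singleton hy0]

theorem eq_dotProduct_smul_of_mulVec_eq_zero (hrank : M.rank + 1 = Fintype.card ι)
    {y z : ι → K} (hy : M *ᵥ y = 0) (hyy : y ⬝ᵥ y = 1) (hz : M *ᵥ z = 0) : z = (y ⬝ᵥ z) • y := by
  have hy0 : y ≠ 0 := by rintro rfl; simp at hyy
  have hz' : z ∈ LinearMap.ker M.mulVecLin := hz
  rw [ker_mulVecLin_eq_span_singleton hrank hy hy0, Submodule.mem_span_singleton] at hz'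
  obtain ⟨t, rfl⟩ := hz'
  rw [dotProduct_smul, hyy, smul_eq_mul, mul_one]

theorem eq_vecMulVec_vecMul_of_mul_eq_zero (hrank : M.rank + 1 = Fintype.card ι) {y : ι → K}
    (hy : M *ᵥ y = 0) (hyy : y ⬝ᵥ y = 1) {A : Matrix ι ι K} (hA : M * A = 0) :
    A = vecMulVec y (y ᵥ* A) := by
  ext i j
  have hcol : M *ᵥ Aᵀ j = 0 := by
    funext k
    simpa [mul_apply, mulVec, dotProduct] using congrFun (congrFun hA k) j
  have := congrFun (eq_dotProduct_smul_of_mulVec_eq_zero hrank hy hyy hcol) i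
  simpa [vecMulVec_apply, vecMul, dotProduct, mul_comm] using this

theorem eq_vecMulVec_mulVec_of_mul_eq_zero (hrank : M.rank + 1 = Fintype.card ι) {x : ι → K}
    (hx : x ᵥ* M = 0) (hxx : x ⬝ᵥ x = 1) {A : Matrix ι ι K} (hA : A * M = 0) :
    A = vecMulVec (A *ᵥ x) x := by
  have hrank' : Mᵀ.rank + 1 = Fintype.card ι := by rwa [rank_transpose]
  have := eq_vecMulVec_vecMul_of_mul_eq_zero hrank' (by rwa [mulVec_transpose]) hxx
    (by rw [← transpose_mul, hA, transpose_zero] : Mᵀ * Aᵀ = 0)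
  simpa [vecMul_transpose] using congrArg transpose this

theorem adjugate_eq_det_add_vecMulVec_smul [DecidableEq ι]
    (hrank : M.rank + 1 = Fintype.card ι) {x y : ι → K} (hx : x ᵥ* M = 0) (hy : M *ᵥ y = 0)
    (hxx : x ⬝ᵥ x = 1) (hyy : y ⬝ᵥ y = 1) :
    M.adjugate = (M + vecMulVec x y).det • vecMulVec y x := by
  have hdet : M.det = 0 :=
    exists_mulVec_eq_zero_iff.mp ⟨y, by rintro rfl; simp at hyy, hy⟩
  have hcols := eq_vecMulVec_vecMul_of_mul_eq_zero hrank hy hyy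
    (by rw [mul_adjugate, hdet, zero_smul])
  have hrows := eq_vecMulVec_mulVec_of_mul_eq_zero hrank hx hxx
    (by rw [adjugate_mul, hdet, zero_smul])
  rw [det_add_vecMulVec, hdet, zero_add]
  calc M.adjugate = vecMulVec y (y ᵥ* M.adjugate) := hcols
    _ = vecMulVec y (y ᵥ* vecMulVec (M.adjugate *ᵥ x) x) := by rw [← hrows]
    _ = (y ⬝ᵥ M.adjugate *ᵥ x) • vecMulVec y x := by rw [vecMul_vecMulVec, vecMulVec_smul]

end Corank

end Matrix

namespace Paper

variable {V : Type*} [Fintype V] {M G : Matrix V V ℝ}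

theorem IsMoorePenrose.transpose (h : IsMoorePenrose M G) : IsMoorePenrose Mᵀ Gᵀ := by
  obtain ⟨h₁, h₂, h₃, h₄⟩ := h
  refine ⟨?_, ?_, ?_, ?_⟩
  · rw [← transpose_mul, ← transpose_mul, ← Matrix.mul_assoc, h₁]
  · rw [← transpose_mul, ← transpose_mul, ← Matrix.mul_assoc, h₂]
  · rw [← transpose_mul, transpose_transpose, h₄]
  · rw [← transpose_mul, transpose_transpose, h₃]

theorem IsMoorePenrose.mulVec_eq_zero_of_vecMul_eq_zero (h : IsMoorePenrose M G) {x : V → ℝ}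
    (hx : x ᵥ* M = 0) : G *ᵥ x = 0 := by
  obtain ⟨-, h₂, h₃, -⟩ := h
  calc G *ᵥ x = (G * (M * G)ᵀ) *ᵥ x := by rw [h₃, ← Matrix.mul_assoc, h₂]
    _ = 0 := by
      rw [transpose_mul, ← mulVec_mulVec, ← mulVec_mulVec, mulVec_transpose M, hx, mulVec_zero,
        mulVec_zero]

theorem IsMoorePenrose.vecMul_eq_zero_of_mulVec_eq_zero (h : IsMoorePenrose M G) {y : V → ℝ}
    (hy : M *ᵥ y = 0) : y ᵥ* G = 0 := by
  rw [← mulVec_transpose]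
  exact h.transpose.mulVec_eq_zero_of_vecMul_eq_zero (by rwa [vecMul_transpose])

theorem IsMoorePenrose.mul_add_vecMulVec_eq_one [DecidableEq V] (h : IsMoorePenrose M G)
    (hrank : M.rank + 1 = Fintype.card V) {x : V → ℝ} (hx : x ᵥ* M = 0) (hxx : x ⬝ᵥ x = 1) :
    M * G + vecMulVec x x = 1 := by
  have hR : (1 - M * G) * M = 0 := by rw [Matrix.sub_mul, Matrix.one_mul, h.1, sub_self]
  have hRx : (1 - M * G) *ᵥ x = x := by
    rw [sub_mulVec, one_mulVec, ← mulVec_mulVec, h.mulVec_eq_zero_of_vecMul_eq_zero hx,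
      mulVec_zero, sub_zero]
  have hR' := eq_vecMulVec_mulVec_of_mul_eq_zero hrank hx hxx hR
  rw [hRx] at hR'
  rw [← hR', add_sub_cancel]

/-- **The pseudoinverse lemma.**
Let `M` be an `(n+1)×(n+1)` real matrix of rank `n` with unit left null vector `x`
and unit right null vector `y`.  Part (a): a cofactor of `M` recovers `(xy^*)(v,u)`;
part (b): the Moore–Penrose pseudoinverse `M⁺` is given by cofactors of the matrices
obtained from `M` by replacing a single column `c ≠ u` by the corresponding column of
`xy^*`.  `M.submatrix v.succAbove u.succAbove` is `M` with row `v` and column `u`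
deleted. -/
theorem pseudoinverse_cofactor_lemma
    {n : ℕ} (M : Matrix (Fin (n + 1)) (Fin (n + 1)) ℝ)
    (hrank : M.rank = n)
    (x y : Fin (n + 1) → ℝ)
    (hx : ∑ i, x i ^ 2 = 1) (hy : ∑ i, y i ^ 2 = 1)
    (hxM : ∀ j, ∑ i, x i * M i j = 0) (hMy : ∀ i, ∑ j, M i j * y j = 0)
    (Mp : Matrix (Fin (n + 1)) (Fin (n + 1)) ℝ) (hMp : IsMoorePenrose M Mp)
    (u v : Fin (n + 1)) :
    ((-1 : ℝ) ^ ((u : ℕ) + (v : ℕ)) / (M + Matrix.vecMulVec x y).det) *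
        (M.submatrix v.succAbove u.succAbove).det = x v * y u ∧
      Mp u v = ((-1 : ℝ) ^ ((u : ℕ) + (v : ℕ)) / (M + Matrix.vecMulVec x y).det) *
        ∑ c ∈ Finset.univ.erase u,
          ((M.updateCol c (fun i => x i * y c)).submatrix v.succAbove u.succAbove).det := by
  have hxx : x ⬝ᵥ x = 1 := by simpa [dotProduct, sq] using hx
  have hyy : y ⬝ᵥ y = 1 := by simpa [dotProduct, sq] using hy
  have hxM' : x ᵥ* M = 0 := funext hxM
  have hMy' : M *ᵥ y = 0 := funext hMy
  have hrank' : M.rank + 1 = Fintype.card (Fin (n + 1)) := by simp [hrank]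
  set N := M + vecMulVec x y
  have hNG : N * (Mp + vecMulVec y x) = 1 := by
    rw [add_vecMulVec_mul_add_vecMulVec hMy' (hMp.vecMul_eq_zero_of_mulVec_eq_zero hMy') hyy,
      hMp.mul_add_vecMulVec_eq_one hrank' hxM' hxx]
  have hdetN : N.det ≠ 0 := det_ne_zero_of_right_inverse hNG
  have hadjN : N.adjugate = N.det • (Mp + vecMulVec y x) := by
    rw [← Matrix.mul_one N.adjugate, ← hNG, ← Matrix.mul_assoc, adjugate_mul, smul_mul,
      Matrix.one_mul]
  have hadjM : M.adjugate = N.det • vecMulVec y x :=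
    adjugate_eq_det_add_vecMulVec_smul hrank' hxM' hMy' hxx hyy
  have hcofactor : ∀ A : Matrix (Fin (n + 1)) (Fin (n + 1)) ℝ,
      (-1 : ℝ) ^ ((u : ℕ) + (v : ℕ)) / N.det * (A.submatrix v.succAbove u.succAbove).det =
        A.adjugate u v / N.det := by
    intro A
    rw [adjugate_fin_succ_eq_det_submatrix, add_comm (v : ℕ)]
    ring
  constructor
  · rw [hcofactor, hadjM, Matrix.smul_apply, vecMulVec_apply, smul_eq_mul,
      mul_div_cancel_left₀ _ hdetN, mul_comm]
  · rw [sum_erase_det_submatrix_updateCol, mul_sub, hcofactor, hcofactor, hadjN, hadjM]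
    simp only [Matrix.smul_apply, Matrix.add_apply, vecMulVec_apply, smul_eq_mul,
      mul_div_cancel_left₀ _ hdetN]
    ring

end Paper
end

section
/- Let Γ be a strongly-connected weighted digraph and let H(u,v) denote the hitting time, i.e. the expected number of steps of the random walk with transition matrix P = D⁻¹A started at u until it first reaches v. Then H(u,v) = (1/τ_v) · Σ_{T₁∪T₂ ∈ 𝔽₂*, u ∈ T₂, r(T₁)=v} d_{r(T₂)}·ω(T₁∪T₂), where 𝔽₂* is the set of rooted spanning 2-forests, r(Tᵢ) the root of component Tᵢ, d_u = Σ_v ω(u,v), ω(F) = Π_{e∈E(F)} ω(e), and τ_v the total weight of spanning in-trees rooted at v. -/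
open scoped Classical
open Finset Matrix

namespace Paper

variable {V : Type*} [Fintype V] [DecidableEq V]

section HittingAux

set_option linter.unusedSectionVars false

lemma reaches_refl (f : V → V) (v : V) : Reaches f v v := ⟨0, rfl⟩

lemma reaches_trans {f : V → V} {a b c : V} (h1 : Reaches f a b) (h2 : Reaches f b c) :
    Reaches f a c := by
  obtain ⟨k, hk⟩ := h1; obtain ⟨l, hl⟩ := h2
  exact ⟨l + k, by rw [Function.iterate_add_apply, hk, hl]⟩

lemma reaches_step (f : V → V) (a : V) : Reaches f a (f a) := ⟨1, rfl⟩

lemma reaches_of_shift {f : V → V} {a c : V} (h : Reaches f a c) (hac : a ≠ c) :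
    Reaches f (f a) c := by
  obtain ⟨k, hk⟩ := h
  cases k with
  | zero => exact absurd hk hac
  | succ n => exact ⟨n, by rw [← Function.iterate_succ_apply]; exact hk⟩

lemma reaches_fixed_unique {f : V → V} {z r₁ r₂ : V} (h1 : f r₁ = r₁) (h2 : f r₂ = r₂)
    (hz1 : Reaches f z r₁) (hz2 : Reaches f z r₂) : r₁ = r₂ := by
  obtain ⟨k, hk⟩ := hz1; obtain ⟨l, hl⟩ := hz2
  rcases le_total k l with h | h
  · have : f^[l] z = r₁ := by
      rw [show l = (l - k) + k by omega, Function.iterate_add_apply, hk,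
        Function.iterate_fixed h1]
    rw [← hl, this]
  · have : f^[k] z = r₂ := by
      rw [show k = (k - l) + l by omega, Function.iterate_add_apply, hl,
        Function.iterate_fixed h2]
    rw [← hk, this]

lemma update_iterate_of_avoid {f : V → V} {u w z r : V} {n : ℕ}
    (hn : f^[n] z = r) (havoid : ∀ j, j < n → f^[j] z ≠ u) :
    (Function.update f u w)^[n] z = r := by
  induction n generalizing z with
  | zero => exact hn
  | succ n ih =>
    have hz : z ≠ u := havoid 0 (Nat.succ_pos n)
    rw [Function.iterate_succ_apply] at hn ⊢
    rw [Function.update_of_ne hz]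
    exact ih hn (fun j hj => by
      have := havoid (j + 1) (Nat.succ_lt_succ hj)
      rwa [Function.iterate_succ_apply] at this)

lemma reaches_update_of_avoid {f : V → V} (u w : V) {z r : V} (h : Reaches f z r)
    (havoid : ¬ Reaches f z u) : Reaches (Function.update f u w) z r := by
  obtain ⟨n, hn⟩ := h
  exact ⟨n, update_iterate_of_avoid hn (fun j _ hj => havoid ⟨j, hj⟩)⟩

lemma reaches_update_or (f : V → V) (u w : V) {z r : V} (h : Reaches f z r) :
    Reaches (Function.update f u w) z r ∨ Reaches (Function.update f u w) z u := by
  obtain ⟨n, hn⟩ := h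
  induction n generalizing z with
  | zero => exact Or.inl ⟨0, hn⟩
  | succ n ih =>
    by_cases hz : z = u
    · exact Or.inr ⟨0, hz⟩
    · rw [Function.iterate_succ_apply] at hn
      have hstep : Reaches (Function.update f u w) z (f z) :=
        ⟨1, by simp [Function.update_of_ne hz]⟩
      rcases ih hn with h | h
      · exact Or.inl (reaches_trans hstep h)
      · exact Or.inr (reaches_trans hstep h)

/-- No return to a non-root vertex that reaches a fixed root. -/
lemma no_return {f : V → V} {z b : V} (hb : f b = b) (hreach : Reaches f z b)
    (hzb : z ≠ b) : ∀ p, 0 < p → f^[p] z ≠ z := by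
  intro p hp hcyc
  obtain ⟨n, hn⟩ := hreach
  have hn0 : n ≠ 0 := fun h => hzb (by simpa [h] using hn)
  have hper : f^[p * n] z = z := by
    rw [Function.iterate_mul]
    exact Function.iterate_fixed hcyc n
  have hge : n ≤ p * n := Nat.le_mul_of_pos_left n hp
  have : f^[p * n] z = b := by
    rw [show p * n = (p * n - n) + n by omega, Function.iterate_add_apply, hn,
      Function.iterate_fixed hb]
  exact hzb (by rw [← hper, this])

/-- The forward orbit of `f z` avoids `z` when `z` reaches a fixed root `b ≠ z`. -/
lemma avoid_of_no_return {f : V → V} {z b : V} (hb : f b = b) (hreach : Reaches f z b)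
    (hzb : z ≠ b) : ¬ Reaches f (f z) z := by
  rintro ⟨j, hj⟩
  exact no_return hb hreach hzb (j + 1) (Nat.succ_pos j)
    (by rwa [Function.iterate_succ_apply])

lemma not_reaches_other {f : V → V} {z r₁ r₂ : V} (h1 : f r₁ = r₁) (h2 : f r₂ = r₂)
    (hne : r₁ ≠ r₂) (hz : Reaches f z r₂) : ¬ Reaches f z r₁ :=
  fun h => hne (reaches_fixed_unique h1 h2 h hz)

lemma isForest2_symm {ω : V → V → ℝ} {r₁ r₂ : V} {f : V → V}
    (h : IsForest2 ω r₁ r₂ f) : IsForest2 ω r₂ r₁ f := by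
  obtain ⟨hne, h1, h2, hpos, hreach⟩ := h
  exact ⟨hne.symm, h2, h1, fun x a b => hpos x b a, fun x => (hreach x).symm⟩

lemma forestWeight_symm (ω : V → V → ℝ) (r₁ r₂ : V) (f : V → V) :
    forestWeight ω r₁ r₂ f = forestWeight ω r₂ r₁ f := by
  unfold forestWeight
  congr 1
  ext x
  simp only [Finset.mem_erase, Finset.mem_univ, and_true]
  tauto

lemma weight_update (ω : V → V → ℝ) {r₁ r₂ u : V} (w : V) (f : V → V)
    (hu1 : u ≠ r₁) (hu2 : u ≠ r₂) :
    ω u w * forestWeight ω r₁ r₂ f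
      = ω u (f u) * forestWeight ω r₁ r₂ (Function.update f u w) := by
  have hmem : u ∈ (Finset.univ.erase r₁).erase r₂ := by
    simp [Finset.mem_erase, hu1, hu2]
  unfold forestWeight
  rw [← Finset.mul_prod_erase _ _ hmem, ← Finset.mul_prod_erase _
    (fun x => ω x (Function.update f u w x)) hmem]
  have : ∏ x ∈ ((Finset.univ.erase r₁).erase r₂).erase u, ω x (Function.update f u w x)
      = ∏ x ∈ ((Finset.univ.erase r₁).erase r₂).erase u, ω x (f x) := by
    refine Finset.prod_congr rfl (fun x hx => ?_)
    rw [Function.update_of_ne (Finset.ne_of_mem_erase hx)]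
  rw [this, Function.update_self]
  ring

lemma weight_tree_update (ω : V → V → ℝ) {v u : V} (w : V) (f : V → V) (huv : u ≠ v) :
    ω u w * forestWeight ω v u f = treeWeight ω v (Function.update f u w) := by
  have hmem : u ∈ Finset.univ.erase v := by simp [huv]
  unfold forestWeight treeWeight
  rw [← Finset.mul_prod_erase _ (fun x => ω x (Function.update f u w x)) hmem,
    Function.update_self]
  congr 1
  refine Finset.prod_congr rfl (fun x hx => ?_)
  rw [Function.update_of_ne (Finset.ne_of_mem_erase hx)]

/-- Key swap lemma: redirecting `u` (in the component of `r₂`) to a vertex `w` in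
the component of `r₁` yields again a 2-forest, with `u` now in component of `r₁`
and `f u` still in component of `r₂`. -/
lemma swap_main {ω : V → V → ℝ} {r₁ r₂ u w : V} {f : V → V}
    (hf : IsForest2 ω r₁ r₂ f) (hu : Reaches f u r₂) (hur2 : u ≠ r₂)
    (hw : Reaches f w r₁) (hpos : 0 < ω u w) :
    IsForest2 ω r₁ r₂ (Function.update f u w) ∧
      Reaches (Function.update f u w) u r₁ ∧
      Reaches (Function.update f u w) (f u) r₂ ∧
      0 < ω u (f u) ∧ u ≠ r₁ := by
  obtain ⟨hne, h1, h2, hposf, hreach⟩ := hf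
  set g := Function.update f u w with hg
  have hur1 : u ≠ r₁ := by
    rintro rfl
    exact (not_reaches_other h1 h2 hne hu) (reaches_refl f _)
  -- w does not reach u in f
  have hwu : ¬ Reaches f w u := by
    intro h
    exact not_reaches_other h1 h2 hne (reaches_trans h hu) hw
  -- u reaches r₁ in g
  have hg_u_r1 : Reaches g u r₁ := by
    have hgu : g u = w := Function.update_self u w f
    have : Reaches g w r₁ := reaches_update_of_avoid u w hw hwu
    exact reaches_trans (by exact ⟨1, hgu⟩) this
  -- f u reaches r₂ in g
  have hfu_r2 : Reaches f (f u) r₂ := reaches_of_shift hu hur2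
  have hfu_avoid : ¬ Reaches f (f u) u := avoid_of_no_return h2 hu hur2
  have hg_fu_r2 : Reaches g (f u) r₂ := reaches_update_of_avoid u w hfu_r2 hfu_avoid
  refine ⟨⟨hne, ?_, ?_, ?_, ?_⟩, hg_u_r1, hg_fu_r2, hposf u hur1 hur2, hur1⟩
  · rw [hg, Function.update_of_ne (Ne.symm hur1), h1]
  · rw [hg, Function.update_of_ne (Ne.symm hur2), h2]
  · intro x hx1 hx2
    by_cases hxu : x = u
    · subst hxu; rw [hg, Function.update_self]; exact hpos
    · rw [hg, Function.update_of_ne hxu]; exact hposf x hx1 hx2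
  · intro z
    rcases hreach z with h | h
    · rcases reaches_update_or f u w h with h' | h'
      · exact Or.inl h'
      · exact Or.inl (reaches_trans h' hg_u_r1)
    · rcases reaches_update_or f u w h with h' | h'
      · exact Or.inr h'
      · exact Or.inl (reaches_trans h' hg_u_r1)

/-- Joining the case `u = r₂`: redirecting the root `u` of the second component to
a vertex `w` of the first component gives a spanning in-tree rooted at `r₁ = v`. -/
lemma tree_of_forest {ω : V → V → ℝ} {v u w : V} {f : V → V}
    (hf : IsForest2 ω v u f) (hw : Reaches f w v) (hpos : 0 < ω u w) :
    IsInTree ω v (Function.update f u w) := by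
  obtain ⟨hne, h1, h2, hposf, hreach⟩ := hf
  set g := Function.update f u w with hg
  have hwu : ¬ Reaches f w u := by
    intro h
    exact hne (reaches_fixed_unique h1 h2 hw h)
  have hg_u_v : Reaches g u v := by
    have hgu : g u = w := Function.update_self u w f
    exact reaches_trans ⟨1, hgu⟩ (reaches_update_of_avoid u w hw hwu)
  refine ⟨?_, ?_, ?_⟩
  · rw [hg, Function.update_of_ne hne, h1]
  · intro x hx
    by_cases hxu : x = u
    · subst hxu; rw [hg, Function.update_self]; exact hpos
    · rw [hg, Function.update_of_ne hxu]; exact hposf x hx hxu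
  · intro z
    rcases hreach z with h | h
    · rcases reaches_update_or f u w h with h' | h'
      · exact h'
      · exact reaches_trans h' hg_u_v
    · rcases reaches_update_or f u w h with h' | h'
      · exact reaches_trans h' hg_u_v
      · exact reaches_trans h' hg_u_v

/-- Cutting the edge at `u ≠ v` of a spanning in-tree gives a 2-forest with roots
`v`, `u`, with `t u` in the component of `v`. -/
lemma forest_of_tree {ω : V → V → ℝ} {v u : V} {t : V → V}
    (ht : IsInTree ω v t) (huv : u ≠ v) :
    IsForest2 ω v u (Function.update t u u) ∧
      Reaches (Function.update t u u) (t u) v ∧ 0 < ω u (t u) := by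
  obtain ⟨h1, hpost, hreach⟩ := ht
  set g := Function.update t u u with hg
  have htu_v : Reaches t (t u) v := reaches_of_shift (hreach u) huv
  have htu_avoid : ¬ Reaches t (t u) u := avoid_of_no_return h1 (hreach u) huv
  refine ⟨⟨Ne.symm huv, ?_, Function.update_self u u t, ?_, ?_⟩,
    reaches_update_of_avoid u u htu_v htu_avoid, hpost u huv⟩
  · rw [hg, Function.update_of_ne (Ne.symm huv), h1]
  · intro x hx1 hx2
    rw [hg, Function.update_of_ne hx2]; exact hpost x hx1
  · intro z
    rcases reaches_update_or t u u (hreach z) with h' | h'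
    · exact Or.inl h'
    · exact Or.inr h'

lemma deg_pos (ω : V → V → ℝ) (hnn : ∀ a b, 0 ≤ ω a b) (hsc : StronglyConnected ω)
    {x y : V} (hxy : x ≠ y) : 0 < deg ω x := by
  rcases (hsc x y).cases_head with h | ⟨c, hc, _⟩
  · exact absurd h hxy
  · exact Finset.sum_pos' (fun i _ => hnn x i) ⟨c, Finset.mem_univ c, hc⟩

/-- counts steps to reach `v` along positive edges -/
def stepN (ω : V → V → ℝ) (v : V) : ℕ → V → Prop
  | 0, x => x = v
  | n + 1, x => ∃ y, 0 < ω x y ∧ stepN ω v n y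

lemma exists_stepN (ω : V → V → ℝ) (v : V) {x : V}
    (h : Relation.ReflTransGen (fun a b => 0 < ω a b) x v) : ∃ n, stepN ω v n x := by
  induction h using Relation.ReflTransGen.head_induction_on with
  | refl => exact ⟨0, rfl⟩
  | head hab _ ih => obtain ⟨n, hn⟩ := ih; exact ⟨n + 1, _, hab, hn⟩

lemma exists_tree (ω : V → V → ℝ) (hsc : StronglyConnected ω) (v : V) :
    ∃ f, IsInTree ω v f ∧ 0 < treeWeight ω v f := by
  have hex : ∀ x : V, ∃ n, stepN ω v n x := fun x => exists_stepN ω v (hsc x v)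
  set d : V → ℕ := fun x => Nat.find (hex x) with hd
  have claim : ∀ x : V, x ≠ v → ∃ y, 0 < ω x y ∧ d y < d x := by
    intro x hx
    have hspec : stepN ω v (d x) x := Nat.find_spec (hex x)
    have hd0 : d x ≠ 0 := by
      intro h0
      rw [h0] at hspec
      exact hx hspec
    obtain ⟨m, hm⟩ : ∃ m, d x = m + 1 := ⟨d x - 1, by omega⟩
    rw [hm] at hspec
    obtain ⟨y, hy, hyn⟩ := hspec
    refine ⟨y, hy, ?_⟩
    have : d y ≤ m := Nat.find_min' (hex y) hyn
    omega
  choose! g hg1 hg2 using claim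
  set f : V → V := fun x => if x = v then v else g x with hf
  have hfv : f v = v := by simp [hf]
  have hpos : ∀ x, x ≠ v → 0 < ω x (f x) := by
    intro x hx; simpa [hf, hx] using hg1 x hx
  have hdlt : ∀ x, x ≠ v → d (f x) < d x := by
    intro x hx; simpa [hf, hx] using hg2 x hx
  have hreach : ∀ n (x : V), d x ≤ n → Reaches f x v := by
    intro n
    induction n with
    | zero =>
      intro x hx
      have h0 : d x = 0 := Nat.le_zero.mp hx
      have hspec : stepN ω v (d x) x := Nat.find_spec (hex x)
      rw [h0] at hspec
      exact hspec ▸ reaches_refl f x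
    | succ n ih =>
      intro x hx
      by_cases hxv : x = v
      · exact hxv ▸ reaches_refl f v
      · have h1 : d (f x) ≤ n := by have := hdlt x hxv; omega
        exact reaches_trans (reaches_step f x) (ih (f x) h1)
  refine ⟨f, ⟨hfv, hpos, fun x => hreach (d x) x le_rfl⟩, ?_⟩
  exact Finset.prod_pos (fun x hx => hpos x (Finset.ne_of_mem_erase hx))

lemma treeWeight_nonneg (ω : V → V → ℝ) (hnn : ∀ a b, 0 ≤ ω a b) (r : V) (f : V → V) :
    0 ≤ treeWeight ω r f := Finset.prod_nonneg (fun x _ => hnn x (f x))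

lemma forestWeight_nonneg (ω : V → V → ℝ) (hnn : ∀ a b, 0 ≤ ω a b) (r₁ r₂ : V) (f : V → V) :
    0 ≤ forestWeight ω r₁ r₂ f := Finset.prod_nonneg (fun x _ => hnn x (f x))

lemma tau_pos (ω : V → V → ℝ) (hnn : ∀ a b, 0 ≤ ω a b) (hsc : StronglyConnected ω) (v : V) :
    0 < tau ω v := by
  obtain ⟨f, hf, hw⟩ := exists_tree ω hsc v
  have hmem : f ∈ Finset.univ.filter (fun f : V → V => IsInTree ω v f) := by
    simp [hf]
  calc 0 < treeWeight ω v f := hw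
    _ ≤ tau ω v := Finset.single_le_sum
        (fun g _ => treeWeight_nonneg ω hnn v g) hmem

/-- Maximum principle: a harmonic-off-`v` function vanishing at `v` is `≤ 0`. -/
lemma max_principle (ω : V → V → ℝ) (hnn : ∀ a b, 0 ≤ ω a b)
    (hsc : StronglyConnected ω) (hdeg : ∀ x : V, 0 < deg ω x) (v : V) (z : V → ℝ)
    (hzv : z v = 0) (hrec : ∀ x, x ≠ v → deg ω x * z x = ∑ w, ω x w * z w) :
    ∀ x, z x ≤ 0 := by
  have hne : (Finset.univ : Finset V).Nonempty := ⟨v, Finset.mem_univ v⟩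
  set M := Finset.univ.sup' hne z with hM
  have hle : ∀ x : V, z x ≤ M := fun x => Finset.le_sup' z (Finset.mem_univ x)
  have key : ∀ x : V, Relation.ReflTransGen (fun a b => 0 < ω a b) x v →
      z x = M → z v = M := by
    intro x hx
    induction hx using Relation.ReflTransGen.head_induction_on with
    | refl => exact fun h => h
    | @head a c hac hcv ih =>
      intro ha
      by_cases hav : a = v
      · exact hav ▸ ha
      · refine ih ?_
        by_contra hcm
        have hclt : z c < M := lt_of_le_of_ne (hle c) hcm
        have hlt : ∑ w, ω a w * z w < ∑ w, ω a w * M := by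
          refine Finset.sum_lt_sum (fun w _ => mul_le_mul_of_nonneg_left (hle w) (hnn a w))
            ⟨c, Finset.mem_univ c, by
              exact mul_lt_mul_of_pos_left hclt hac⟩
        rw [← hrec a hav, ha, ← Finset.sum_mul,
          show (∑ w, ω a w) = deg ω a from rfl] at hlt
        exact lt_irrefl _ hlt
  obtain ⟨x0, _, hx0⟩ := Finset.exists_mem_eq_sup' hne z
  have : z v = M := key x0 (hsc x0 v) hx0.symm
  intro x
  calc z x ≤ M := hle x
    _ = 0 := by rw [← this, hzv]

lemma not_reaches_iff {ω : V → V → ℝ} {v b : V} {f : V → V} (hf : IsForest2 ω v b f)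
    (x : V) : ¬ Reaches f x b ↔ Reaches f x v := by
  obtain ⟨hne, h1, h2, -, hreach⟩ := hf
  constructor
  · intro h
    rcases hreach x with h' | h'
    · exact h'
    · exact absurd h' h
  · intro h
    exact not_reaches_other h2 h1 hne.symm h

/-- The crucial one-term cancellation. -/
lemma per_b (ω : V → V → ℝ) (hnn : ∀ a b, 0 ≤ ω a b) {v u : V} (huv : u ≠ v) (b : V) :
    (∑ p ∈ Finset.univ.filter
        (fun p : V × (V → V) => IsForest2 ω v b p.2 ∧ Reaches p.2 u b),
        ω u p.1 * forestWeight ω v b p.2)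
    - (∑ p ∈ Finset.univ.filter
        (fun p : V × (V → V) => IsForest2 ω v b p.2 ∧ Reaches p.2 p.1 b),
        ω u p.1 * forestWeight ω v b p.2)
    = if b = u then tau ω v else 0 := by
  classical
  set val : V × (V → V) → ℝ := fun p => ω u p.1 * forestWeight ω v b p.2 with hval
  -- split off the common part
  have hsplit1 := Finset.sum_filter_add_sum_filter_not
    (Finset.univ.filter (fun p : V × (V → V) => IsForest2 ω v b p.2 ∧ Reaches p.2 u b))
    (fun p => Reaches p.2 p.1 b) val
  have hsplit2 := Finset.sum_filter_add_sum_filter_not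
    (Finset.univ.filter (fun p : V × (V → V) => IsForest2 ω v b p.2 ∧ Reaches p.2 p.1 b))
    (fun p => Reaches p.2 u b) val
  have hcomm : (Finset.univ.filter
        (fun p : V × (V → V) => IsForest2 ω v b p.2 ∧ Reaches p.2 u b)).filter
        (fun p => Reaches p.2 p.1 b)
      = (Finset.univ.filter
        (fun p : V × (V → V) => IsForest2 ω v b p.2 ∧ Reaches p.2 p.1 b)).filter
        (fun p => Reaches p.2 u b) := by
    ext p
    simp only [Finset.mem_filter, Finset.mem_univ, true_and]
    tauto
  rw [hcomm] at hsplit1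
  -- name the two leftover sums
  have hdiff : (∑ p ∈ Finset.univ.filter
        (fun p : V × (V → V) => IsForest2 ω v b p.2 ∧ Reaches p.2 u b), val p)
      - (∑ p ∈ Finset.univ.filter
        (fun p : V × (V → V) => IsForest2 ω v b p.2 ∧ Reaches p.2 p.1 b), val p)
      = (∑ p ∈ (Finset.univ.filter
          (fun p : V × (V → V) => IsForest2 ω v b p.2 ∧ Reaches p.2 u b)).filter
          (fun p => ¬ Reaches p.2 p.1 b), val p)
      - (∑ p ∈ (Finset.univ.filter
          (fun p : V × (V → V) => IsForest2 ω v b p.2 ∧ Reaches p.2 p.1 b)).filter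
          (fun p => ¬ Reaches p.2 u b), val p) := by
    linarith [hsplit1, hsplit2]
  rw [hdiff]
  -- canonical presentation of the two leftover sums, with positivity included
  have hX : (Finset.univ.filter
        (fun p : V × (V → V) => IsForest2 ω v b p.2 ∧ Reaches p.2 u b)).filter
        (fun p => ¬ Reaches p.2 p.1 b)
      = Finset.univ.filter (fun p : V × (V → V) =>
          IsForest2 ω v b p.2 ∧ Reaches p.2 u b ∧ Reaches p.2 p.1 v) := by
    rw [Finset.filter_filter]
    ext p
    simp only [Finset.mem_filter, Finset.mem_univ, true_and]
    constructor
    · rintro ⟨⟨hF, hu⟩, hn⟩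
      exact ⟨hF, hu, (not_reaches_iff hF p.1).1 hn⟩
    · rintro ⟨hF, hu, hv⟩
      exact ⟨⟨hF, hu⟩, (not_reaches_iff hF p.1).2 hv⟩
  have hY : (Finset.univ.filter
        (fun p : V × (V → V) => IsForest2 ω v b p.2 ∧ Reaches p.2 p.1 b)).filter
        (fun p => ¬ Reaches p.2 u b)
      = Finset.univ.filter (fun p : V × (V → V) =>
          IsForest2 ω v b p.2 ∧ Reaches p.2 u v ∧ Reaches p.2 p.1 b) := by
    rw [Finset.filter_filter]
    ext p
    simp only [Finset.mem_filter, Finset.mem_univ, true_and]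
    constructor
    · rintro ⟨⟨hF, hw⟩, hn⟩
      exact ⟨hF, (not_reaches_iff hF u).1 hn, hw⟩
    · rintro ⟨hF, hu, hw⟩
      exact ⟨⟨hF, hw⟩, (not_reaches_iff hF u).2 hu⟩
  rw [hX, hY]
  -- restrict to positive weight of the marked edge
  have e1 : (∑ p ∈ Finset.univ.filter (fun p : V × (V → V) =>
        IsForest2 ω v b p.2 ∧ Reaches p.2 u b ∧ Reaches p.2 p.1 v), val p)
      = ∑ p ∈ Finset.univ.filter (fun p : V × (V → V) =>
        (IsForest2 ω v b p.2 ∧ Reaches p.2 u b ∧ Reaches p.2 p.1 v) ∧ 0 < ω u p.1), val p := by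
    refine (Finset.sum_subset ?_ ?_).symm
    · intro p hp
      rw [Finset.mem_filter] at hp ⊢
      exact ⟨hp.1, hp.2.1⟩
    · intro p hp hnp
      rw [Finset.mem_filter] at hp hnp
      have h0 : ¬ (0 < ω u p.1) := fun h => hnp ⟨hp.1, hp.2, h⟩
      have : ω u p.1 = 0 := le_antisymm (not_lt.mp h0) (hnn u p.1)
      simp [hval, this]
  have e2 : (∑ p ∈ Finset.univ.filter (fun p : V × (V → V) =>
        IsForest2 ω v b p.2 ∧ Reaches p.2 u v ∧ Reaches p.2 p.1 b), val p)
      = ∑ p ∈ Finset.univ.filter (fun p : V × (V → V) =>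
        (IsForest2 ω v b p.2 ∧ Reaches p.2 u v ∧ Reaches p.2 p.1 b) ∧ 0 < ω u p.1), val p := by
    refine (Finset.sum_subset ?_ ?_).symm
    · intro p hp
      rw [Finset.mem_filter] at hp ⊢
      exact ⟨hp.1, hp.2.1⟩
    · intro p hp hnp
      rw [Finset.mem_filter] at hp hnp
      have h0 : ¬ (0 < ω u p.1) := fun h => hnp ⟨hp.1, hp.2, h⟩
      have : ω u p.1 = 0 := le_antisymm (not_lt.mp h0) (hnn u p.1)
      simp [hval, this]
  rw [e1, e2]
  by_cases hbu : b = u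
  · subst hbu
    rw [if_pos rfl]
    -- second sum is zero
    have hY0 : (∑ p ∈ Finset.univ.filter (fun p : V × (V → V) =>
        (IsForest2 ω v b p.2 ∧ Reaches p.2 b v ∧ Reaches p.2 p.1 b) ∧ 0 < ω b p.1),
        val p) = 0 := by
      refine Finset.sum_eq_zero (fun p hp => ?_)
      rw [Finset.mem_filter] at hp
      obtain ⟨-, ⟨⟨hne, h1, h2, -, -⟩, hu, -⟩, -⟩ := hp
      obtain ⟨k, hk⟩ := hu
      rw [Function.iterate_fixed h2] at hk
      exact absurd hk.symm hne
    rw [hY0, sub_zero]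
    -- first sum equals tau via the tree bijection
    unfold tau
    refine Finset.sum_bij' (i := fun p _ => Function.update p.2 b p.1)
      (j := fun t _ => (t b, Function.update t b b)) ?_ ?_ ?_ ?_ ?_
    · intro p hp
      rw [Finset.mem_filter] at hp ⊢
      obtain ⟨-, ⟨hF, -, hw⟩, hpos⟩ := hp
      exact ⟨Finset.mem_univ _, tree_of_forest hF hw hpos⟩
    · intro t ht
      rw [Finset.mem_filter] at ht ⊢
      obtain ⟨-, ht⟩ := ht
      obtain ⟨hF, hwv, hpos⟩ := forest_of_tree ht huv
      exact ⟨Finset.mem_univ _, ⟨hF, reaches_refl _ _, hwv⟩, hpos⟩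
    · intro p hp
      rw [Finset.mem_filter] at hp
      obtain ⟨-, ⟨⟨hne, h1, h2, -, -⟩, -, -⟩, -⟩ := hp
      refine Prod.ext (by simp) ?_
      show Function.update (Function.update p.2 b p.1) b b = p.2
      rw [Function.update_idem]
      exact Function.update_eq_self_iff.2 h2.symm
    · intro t ht
      show Function.update (Function.update t b b) b (t b) = t
      rw [Function.update_idem, Function.update_eq_self]
    · intro p hp
      exact weight_tree_update ω p.1 p.2 huv
  · rw [if_neg hbu]
    have hub2 : u ≠ b := fun h => hbu h.symm
    -- the two sums are equal via the swap bijection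
    have hbij : (∑ p ∈ Finset.univ.filter (fun p : V × (V → V) =>
        (IsForest2 ω v b p.2 ∧ Reaches p.2 u b ∧ Reaches p.2 p.1 v) ∧ 0 < ω u p.1), val p)
      = (∑ p ∈ Finset.univ.filter (fun p : V × (V → V) =>
        (IsForest2 ω v b p.2 ∧ Reaches p.2 u v ∧ Reaches p.2 p.1 b) ∧ 0 < ω u p.1), val p) := by
      refine Finset.sum_bij' (i := fun p _ => (p.2 u, Function.update p.2 u p.1))
        (j := fun p _ => (p.2 u, Function.update p.2 u p.1)) ?_ ?_ ?_ ?_ ?_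
      · intro p hp
        rw [Finset.mem_filter] at hp ⊢
        obtain ⟨-, ⟨hF, hub, hwv⟩, hpos⟩ := hp
        obtain ⟨hF', huv', hfub', hposfu, -⟩ := swap_main hF hub hub2 hwv hpos
        exact ⟨Finset.mem_univ _, ⟨hF', huv', hfub'⟩, hposfu⟩
      · intro p hp
        rw [Finset.mem_filter] at hp ⊢
        obtain ⟨-, ⟨hF, huvR, hwb⟩, hpos⟩ := hp
        obtain ⟨hF', hub', hfuv', hposfu, -⟩ :=
          swap_main (isForest2_symm hF) huvR huv hwb hpos
        exact ⟨Finset.mem_univ _, ⟨isForest2_symm hF', hub', hfuv'⟩, hposfu⟩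
      · intro p hp
        refine Prod.ext (by simp) ?_
        show Function.update (Function.update p.2 u p.1) u (p.2 u) = p.2
        rw [Function.update_idem, Function.update_eq_self]
      · intro p hp
        refine Prod.ext (by simp) ?_
        show Function.update (Function.update p.2 u p.1) u (p.2 u) = p.2
        rw [Function.update_idem, Function.update_eq_self]
      · intro p hp
        exact weight_update ω p.1 p.2 huv hub2
    rw [hbij, sub_self]

noncomputable def Fsum (ω : V → V → ℝ) (v x : V) : ℝ :=
  ∑ b : V, ∑ f ∈ Finset.univ.filter
      (fun f : V → V => IsForest2 ω v b f ∧ Reaches f x b),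
    deg ω b * forestWeight ω v b f

lemma Fsum_root (ω : V → V → ℝ) (v : V) : Fsum ω v v = 0 := by
  unfold Fsum
  refine Finset.sum_eq_zero (fun b _ => Finset.sum_eq_zero (fun f hf => ?_))
  rw [Finset.mem_filter] at hf
  obtain ⟨-, ⟨hne, h1, -, -, -⟩, hr⟩ := hf
  obtain ⟨k, hk⟩ := hr
  rw [Function.iterate_fixed h1] at hk
  exact absurd hk hne

lemma pair_sum (ω : V → V → ℝ) (u : V) (P : V → (V → V) → Prop)
    [DecidablePred (fun p : V × (V → V) => P p.1 p.2)] [∀ w, DecidablePred (P w)]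
    (g : (V → V) → ℝ) :
    ∑ p ∈ Finset.univ.filter (fun p : V × (V → V) => P p.1 p.2), ω u p.1 * g p.2
      = ∑ w, ω u w * ∑ f ∈ Finset.univ.filter (fun f => P w f), g f := by
  rw [Finset.sum_filter, Fintype.sum_prod_type]
  refine Finset.sum_congr rfl (fun w _ => ?_)
  rw [Finset.mul_sum, Finset.sum_filter]

lemma key_identity (ω : V → V → ℝ) (hnn : ∀ a b, 0 ≤ ω a b) {v u : V} (huv : u ≠ v) :
    deg ω u * Fsum ω v u = deg ω u * tau ω v + ∑ w, ω u w * Fsum ω v w := by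
  classical
  have h1 : deg ω u * Fsum ω v u = ∑ b, deg ω b *
      ∑ p ∈ Finset.univ.filter
        (fun p : V × (V → V) => IsForest2 ω v b p.2 ∧ Reaches p.2 u b),
        ω u p.1 * forestWeight ω v b p.2 := by
    unfold Fsum
    rw [Finset.mul_sum]
    refine Finset.sum_congr rfl (fun b _ => ?_)
    rw [pair_sum ω u (fun _ f => IsForest2 ω v b f ∧ Reaches f u b) (forestWeight ω v b)]
    rw [← Finset.mul_sum, ← Finset.sum_mul,
      show (∑ w : V, ω u w) = deg ω u from rfl]
    ring
  have h2 : (∑ w, ω u w * Fsum ω v w) = ∑ b, deg ω b *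
      ∑ p ∈ Finset.univ.filter
        (fun p : V × (V → V) => IsForest2 ω v b p.2 ∧ Reaches p.2 p.1 b),
        ω u p.1 * forestWeight ω v b p.2 := by
    unfold Fsum
    rw [show (∑ w, ω u w * ∑ b : V, ∑ f ∈ Finset.univ.filter
        (fun f : V → V => IsForest2 ω v b f ∧ Reaches f w b),
        deg ω b * forestWeight ω v b f)
      = ∑ w, ∑ b : V, ω u w * ∑ f ∈ Finset.univ.filter
        (fun f : V → V => IsForest2 ω v b f ∧ Reaches f w b),
        deg ω b * forestWeight ω v b f from
      Finset.sum_congr rfl (fun w _ => Finset.mul_sum _ _ _), Finset.sum_comm]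
    refine Finset.sum_congr rfl (fun b _ => ?_)
    rw [pair_sum ω u (fun w f => IsForest2 ω v b f ∧ Reaches f w b) (forestWeight ω v b),
      Finset.mul_sum]
    refine Finset.sum_congr rfl (fun w _ => ?_)
    rw [← Finset.mul_sum]
    ring
  rw [h1, h2]
  have h3 : ∀ b : V, (deg ω b *
      ∑ p ∈ Finset.univ.filter
        (fun p : V × (V → V) => IsForest2 ω v b p.2 ∧ Reaches p.2 u b),
        ω u p.1 * forestWeight ω v b p.2)
      - (deg ω b *
      ∑ p ∈ Finset.univ.filter
        (fun p : V × (V → V) => IsForest2 ω v b p.2 ∧ Reaches p.2 p.1 b),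
        ω u p.1 * forestWeight ω v b p.2)
      = deg ω b * (if b = u then tau ω v else 0) := by
    intro b
    rw [← mul_sub, per_b ω hnn huv b]
  have h4 : (∑ b, deg ω b * (if b = u then tau ω v else 0)) = deg ω u * tau ω v := by
    rw [Finset.sum_eq_single u]
    · rw [if_pos rfl]
    · intro c _ hc
      rw [if_neg hc, mul_zero]
    · intro h
      exact absurd (Finset.mem_univ u) h
  have h5 := Finset.sum_congr rfl (fun b (_ : b ∈ Finset.univ) => h3 b)
  rw [Finset.sum_sub_distrib] at h5
  rw [h4] at h5
  linarith


end HittingAux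

/-- **Forest formula for the hitting time of a strongly-connected digraph.**
The hitting time `H` is characterized by `H(v,v) = 0` and the one-step recurrence
`H(u,v) = 1 + Σ_w P(u,w)·H(w,v)` for `u ≠ v`, where `P = D⁻¹A`. -/
theorem hitting_time_forest_formula_digraph
    {V : Type*} [Fintype V] [DecidableEq V]
    (ω : V → V → ℝ) (hnn : ∀ u v, 0 ≤ ω u v) (hloop : ∀ v, ω v v = 0)
    (hsc : StronglyConnected ω)
    (H : V → V → ℝ) (hH0 : ∀ v, H v v = 0)
    (hHrec : ∀ u v, u ≠ v → H u v = 1 + ∑ w, (ω u w / deg ω u) * H w v)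
    (u v : V) :
    H u v = (1 / tau ω v) * ∑ b : V, ∑ f ∈ Finset.univ.filter
        (fun f : V → V => IsForest2 ω v b f ∧ Reaches f u b),
        deg ω b * forestWeight ω v b f := by
  classical
  by_cases huv : u = v
  · subst huv
    rw [hH0]
    have hz : (∑ b : V, ∑ f ∈ Finset.univ.filter
        (fun f : V → V => IsForest2 ω u b f ∧ Reaches f u b),
        deg ω b * forestWeight ω u b f) = 0 := Fsum_root ω u
    rw [hz, mul_zero]
  · have hdeg : ∀ x : V, 0 < deg ω x := by
      intro x
      by_cases hx : x = u
      · subst hx; exact deg_pos ω hnn hsc huv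
      · exact deg_pos ω hnn hsc hx
    have htau : 0 < tau ω v := tau_pos ω hnn hsc v
    have htau0 : tau ω v ≠ 0 := ne_of_gt htau
    set G : V → ℝ := fun x => Fsum ω v x / tau ω v with hG
    have hHrec' : ∀ x, x ≠ v → deg ω x * H x v = deg ω x + ∑ w, ω x w * H w v := by
      intro x hx
      have hx0 : deg ω x ≠ 0 := ne_of_gt (hdeg x)
      rw [hHrec x v hx, mul_add, mul_one, Finset.mul_sum]
      congr 1
      refine Finset.sum_congr rfl (fun w _ => ?_)
      field_simp
    have hGrec : ∀ x, x ≠ v → deg ω x * G x = deg ω x + ∑ w, ω x w * G w := by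
      intro x hx
      have hk := key_identity ω hnn hx
      have e : (∑ w, ω x w * G w) = (∑ w, ω x w * Fsum ω v w) / tau ω v := by
        rw [Finset.sum_div]
        exact Finset.sum_congr rfl (fun w _ => (mul_div_assoc _ _ _).symm)
      rw [hG]
      simp only []
      rw [e, mul_div_assoc', hk, add_div, mul_div_cancel_right₀ _ htau0]
    set z : V → ℝ := fun x => H x v - G x with hzdef
    have hzv : z v = 0 := by
      simp only [hzdef, hG, hH0, Fsum_root ω v, zero_div, sub_zero]
    have hzrec : ∀ x, x ≠ v → deg ω x * z x = ∑ w, ω x w * z w := by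
      intro x hx
      have e1 := hHrec' x hx
      have e2 := hGrec x hx
      have : ∑ w, ω x w * z w = (∑ w, ω x w * H w v) - ∑ w, ω x w * G w := by
        rw [← Finset.sum_sub_distrib]
        exact Finset.sum_congr rfl (fun w _ => by simp [hzdef]; ring)
      rw [this]
      simp only [hzdef]
      rw [mul_sub]
      linarith
    have hz1 : ∀ x, z x ≤ 0 :=
      max_principle ω hnn hsc hdeg v z hzv hzrec
    have hz2 : ∀ x, -(z x) ≤ 0 := by
      refine max_principle ω hnn hsc hdeg v (fun x => -(z x)) (by simp [hzv]) ?_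
      intro x hx
      have := hzrec x hx
      simp only [mul_neg]
      rw [this, ← Finset.sum_neg_distrib]
    have hz0 : z u = 0 := le_antisymm (hz1 u) (by linarith [hz2 u])
    have hHu : H u v = Fsum ω v u / tau ω v := by
      have : H u v - G u = 0 := hz0
      have h2 : H u v = G u := by linarith
      rw [h2, hG]
    rw [one_div_mul_eq_div]
    exact hHu


end Paper
end
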